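/- arXiv:0908.4461 — 7 statements merged into one kernel-verified Lean document; each statement's English description precedes it below -/
import Mathlib

section
/- Let A be an integer matrix and let B₀ be the set of square-free (entries in {-1,0,1}) elements of the Graver basis of A. Then for any two zero-one vectors x, y with Ax = Ay, there exist z₁,…,z_K ∈ ±B₀ such that y = x + z₁ + ⋯ + z_K and every partial sum x + z₁ + ⋯ + z_k (1 ≤ k ≤ K) is a zero-one vector. -/
/-- zero-one vector -/
def zeroOne {n : ℕ} (x : Fin n → ℤ) : Prop := ∀ i, x i = 0 ∨ x i = 1

/-- square-free vector: all entries in {-1,0,1} -/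
def sqFree {n : ℕ} (z : Fin n → ℤ) : Prop := ∀ i, z i = -1 ∨ z i = 0 ∨ z i = 1

/-- a move for the configuration A -/
def isMove {m n : ℕ} (A : Matrix (Fin m) (Fin n) ℤ) (z : Fin n → ℤ) : Prop := A.mulVec z = 0

/-- no sign cancellation in any coordinate -/
def conformal {n : ℕ} (z₁ z₂ : Fin n → ℤ) : Prop := ∀ i, 0 ≤ z₁ i * z₂ i

/-- primitive move: not a conformal sum of two nonzero moves (an element of the Graver basis) -/
def primitive {m n : ℕ} (A : Matrix (Fin m) (Fin n) ℤ) (z : Fin n → ℤ) : Prop :=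
  isMove A z ∧ z ≠ 0 ∧
    ¬ ∃ z₁ z₂ : Fin n → ℤ, isMove A z₁ ∧ isMove A z₂ ∧ z₁ ≠ 0 ∧ z₂ ≠ 0 ∧
        conformal z₁ z₂ ∧ z = z₁ + z₂

/-!
If `x ≠ y` are zero-one vectors in the same fibre, `y - x` is a nonzero square-free move. Every
nonzero move `z` has a primitive move `g` conformally below it (`g` and `z - g` conformal), found by
splitting `z` conformally until it is primitive; the ℓ¹-norm adds up along conformal sums, so
this terminates. As `y - x` is square-free, each entry of `g` is `0` or `y i - x i`, so `g` is
square-free and `x + g` is again a zero-one vector, strictly closer to `y` in ℓ¹-norm.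
-/

open Finset Matrix

def oneNorm {n : ℕ} (z : Fin n → ℤ) : ℕ := ∑ i, (z i).natAbs

def conformalLE {n : ℕ} (g z : Fin n → ℤ) : Prop := conformal g (z - g)

theorem Int.natAbs_add_of_mul_nonneg {a b : ℤ} (h : 0 ≤ a * b) :
    (a + b).natAbs = a.natAbs + b.natAbs := by
  rcases mul_nonneg_iff.1 h with ⟨ha, hb⟩ | ⟨ha, hb⟩
  · exact Int.natAbs_add_of_nonneg ha hb
  · exact Int.natAbs_add_of_nonpos ha hb

theorem Int.eq_zero_or_eq_of_mul_sub_nonneg {a g : ℤ} (ha : a = -1 ∨ a = 0 ∨ a = 1)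
    (h : 0 ≤ g * (a - g)) : g = 0 ∨ g = a := by
  rcases mul_nonneg_iff.1 h with ⟨h₁, h₂⟩ | ⟨h₁, h₂⟩ <;> omega

section

variable {n : ℕ}

theorem oneNorm_add_of_conformal {a b : Fin n → ℤ} (h : conformal a b) :
    oneNorm (a + b) = oneNorm a + oneNorm b := by
  simp only [oneNorm, Pi.add_apply, Int.natAbs_add_of_mul_nonneg (h _), sum_add_distrib]

theorem oneNorm_pos {z : Fin n → ℤ} (hz : z ≠ 0) : 0 < oneNorm z := by
  obtain ⟨i, hi⟩ := Function.ne_iff.1 hz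
  exact lt_of_lt_of_le (Int.natAbs_pos.2 hi)
    (single_le_sum (f := fun j => (z j).natAbs) (fun j _ => Nat.zero_le _) (mem_univ i))

theorem conformalLE_refl (z : Fin n → ℤ) : conformalLE z z := by
  simp [conformalLE, conformal]

theorem conformalLE.add_right {g a b : Fin n → ℤ} (hg : conformalLE g a) (hab : conformal a b) :
    conformalLE g (a + b) := by
  intro i
  have hgi := hg i
  simp only [Pi.sub_apply, Pi.add_apply] at hgi ⊢
  rcases mul_nonneg_iff.1 hgi with ⟨h₁, h₂⟩ | ⟨h₁, h₂⟩ <;>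
    rcases mul_nonneg_iff.1 (hab i) with ⟨h₃, h₄⟩ | ⟨h₃, h₄⟩ <;> nlinarith

theorem exists_primitive_conformalLE {m : ℕ} {A : Matrix (Fin m) (Fin n) ℤ} {z : Fin n → ℤ}
    (hz : isMove A z) (hz0 : z ≠ 0) : ∃ g, primitive A g ∧ conformalLE g z := by
  by_cases hp : primitive A z
  · exact ⟨z, hp, conformalLE_refl z⟩
  obtain ⟨z₁, z₂, hz₁, -, hz₁0, hz₂0, hc, rfl⟩ :
      ∃ z₁ z₂, isMove A z₁ ∧ isMove A z₂ ∧ z₁ ≠ 0 ∧ z₂ ≠ 0 ∧ conformal z₁ z₂ ∧ z = z₁ + z₂ := by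
    simpa [primitive, hz, hz0] using hp
  -- consumed by the termination proof (`decreasing_by` searches the context)
  have hlt : oneNorm z₁ < oneNorm (z₁ + z₂) := by
    rw [oneNorm_add_of_conformal hc]
    exact Nat.lt_add_of_pos_right (oneNorm_pos hz₂0)
  obtain ⟨g, hg, hgz₁⟩ := exists_primitive_conformalLE hz₁ hz₁0
  exact ⟨g, hg, hgz₁.add_right hc⟩
termination_by oneNorm z

end

theorem Fin.sum_Iic_succ {M : Type*} [AddCommMonoid M] {K : ℕ} (f : Fin (K + 1) → M) (k : Fin K) :
    ∑ j ∈ Iic k.succ, f j = f 0 + ∑ j ∈ Iic k, f j.succ := by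
  rw [← Icc_bot, Icc_eq_cons_Ioc bot_le, Finset.sum_cons, bot_eq_zero, ← Fin.map_succEmb_Iic, sum_map]
  rfl

section

variable {n : ℕ}

theorem sqFree_sub_of_zeroOne {x y : Fin n → ℤ} (hx : zeroOne x) (hy : zeroOne y) :
    sqFree (y - x) := by
  intro i
  rcases hx i with h | h <;> rcases hy i with h' | h' <;> simp [h, h']

theorem conformalLE.eq_zero_or_eq_of_sqFree {g z : Fin n → ℤ} (hg : conformalLE g z)
    (hz : sqFree z) (i : Fin n) : g i = 0 ∨ g i = z i :=
  Int.eq_zero_or_eq_of_mul_sub_nonneg (hz i) (hg i)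

theorem conformalLE.sqFree {g z : Fin n → ℤ} (hg : conformalLE g z) (hz : sqFree z) :
    sqFree g := by
  intro i
  rcases hg.eq_zero_or_eq_of_sqFree hz i with h | h <;> rw [h]
  exacts [Or.inr (Or.inl rfl), hz i]

theorem conformalLE.zeroOne_add {x y g : Fin n → ℤ} (hg : conformalLE g (y - x))
    (hx : zeroOne x) (hy : zeroOne y) : zeroOne (x + g) := by
  intro i
  have := hg.eq_zero_or_eq_of_sqFree (sqFree_sub_of_zeroOne hx hy) i
  simp only [Pi.add_apply, Pi.sub_apply] at this ⊢
  rcases hx i with h | h <;> rcases hy i with h' | h' <;> omega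

theorem exists_primitive_sqFree_walk {m : ℕ} {A : Matrix (Fin m) (Fin n) ℤ} {x y : Fin n → ℤ}
    (hx : zeroOne x) (hy : zeroOne y) (hfib : A *ᵥ x = A *ᵥ y) :
    ∃ (K : ℕ) (z : Fin K → (Fin n → ℤ)), (∀ k, primitive A (z k) ∧ sqFree (z k)) ∧
      y = x + ∑ k, z k ∧ ∀ k : Fin K, zeroOne (x + ∑ j ∈ Iic k, z j) := by
  by_cases hxy : x = y
  · exact ⟨0, Fin.elim0, fun k => k.elim0, by simp [hxy], fun k => k.elim0⟩
  have hmove : isMove A (y - x) := by rw [isMove, Matrix.mulVec_sub, hfib, sub_self]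
  obtain ⟨g, hg, hgle⟩ := exists_primitive_conformalLE hmove (sub_ne_zero.2 (Ne.symm hxy))
  have hxg : zeroOne (x + g) := hgle.zeroOne_add hx hy
  have hlt : oneNorm (y - (x + g)) < oneNorm (y - x) := by
    have h := oneNorm_add_of_conformal hgle
    rw [add_sub_cancel, sub_sub] at h
    have := oneNorm_pos hg.2.1
    omega
  obtain ⟨K, z, hz, hsum, hpath⟩ := exists_primitive_sqFree_walk hxg hy
    (by rw [Matrix.mulVec_add, hg.1, add_zero, hfib])
  refine ⟨K + 1, Fin.cons g z,
    Fin.cases ⟨hg, hgle.sqFree (sqFree_sub_of_zeroOne hx hy)⟩ hz, ?_, Fin.cases ?_ fun k => ?_⟩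
  · rwa [Fin.sum_cons, ← add_assoc]
  · rwa [← bot_eq_zero, Iic_bot, sum_singleton, bot_eq_zero, Fin.cons_zero]
  · simpa only [Fin.sum_Iic_succ, Fin.cons_zero, Fin.cons_succ, ← add_assoc] using hpath k
termination_by oneNorm (y - x)

end

theorem stmt0 {m n : ℕ} (A : Matrix (Fin m) (Fin n) ℤ)
    (x y : Fin n → ℤ) (hx : zeroOne x) (hy : zeroOne y)
    (hfib : A.mulVec x = A.mulVec y) :
    ∃ (K : ℕ) (z : Fin K → (Fin n → ℤ)),
      (∀ k, (primitive A (z k) ∧ sqFree (z k)) ∨ (primitive A (-(z k)) ∧ sqFree (-(z k)))) ∧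
      y = x + ∑ k, z k ∧
      (∀ k : Fin K, zeroOne (x + ∑ j ∈ Finset.Iic k, z j)) := by
  obtain ⟨K, z, hz, hsum, hpath⟩ := exists_primitive_sqFree_walk hx hy hfib
  exact ⟨K, z, fun k => Or.inl (hz k), hsum, hpath⟩
end

section
/- Suppose that for every pair of distinct zero-one vectors x, y with Ax = Ay there exist distinct cells i₁, i₂, i₃, i₄ such that (after possibly swapping x and y) x(i₁) > y(i₁), x(i₂) > y(i₂), x(i₃) < y(i₃), x(i₄) ≤ y(i₄), and z = e_{i₃} + e_{i₄} − e_{i₁} − e_{i₂} satisfies Az = 0. Then either x + z or y − z is a zero-one vector in the same fiber whose L¹-distance to the other vector is strictly smaller than |x − y|₁. -/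
/-- standard unit vector at cell i -/
def e {n : ℕ} (i : Fin n) : Fin n → ℤ := fun j => if j = i then 1 else 0

/-- L¹-norm -/
def l1 {n : ℕ} (x : Fin n → ℤ) : ℤ := ∑ i, |x i|

lemma l1_lt_aux {n : ℕ} (f g : Fin n → ℤ) (i₁ i₂ i₃ i₄ : Fin n)
    (h12 : i₁ ≠ i₂) (h13 : i₁ ≠ i₃) (h14 : i₁ ≠ i₄)
    (h23 : i₂ ≠ i₃) (h24 : i₂ ≠ i₄) (h34 : i₃ ≠ i₄)
    (hout : ∀ i, i ≠ i₁ → i ≠ i₂ → i ≠ i₃ → i ≠ i₄ → f i = g i)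
    (hin : |f i₁| + |f i₂| + |f i₃| + |f i₄| < |g i₁| + |g i₂| + |g i₃| + |g i₄|) :
    l1 f < l1 g := by
  classical
  unfold l1
  have hs : ({i₁, i₂, i₃, i₄} : Finset (Fin n)) ⊆ Finset.univ := Finset.subset_univ _
  rw [← Finset.sum_sdiff hs (f := fun i => |f i|), ← Finset.sum_sdiff hs (f := fun i => |g i|)]
  have h1 : ∑ i ∈ Finset.univ \ {i₁,i₂,i₃,i₄}, |f i| = ∑ i ∈ Finset.univ \ {i₁,i₂,i₃,i₄}, |g i| := by
    apply Finset.sum_congr rfl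
    intro i hi
    simp only [Finset.mem_sdiff, Finset.mem_insert, Finset.mem_singleton] at hi
    push_neg at hi
    rw [hout i hi.2.1 hi.2.2.1 hi.2.2.2.1 hi.2.2.2.2]
  have h2 : ∑ i ∈ ({i₁,i₂,i₃,i₄} : Finset (Fin n)), |f i| = |f i₁| + |f i₂| + |f i₃| + |f i₄| := by
    rw [Finset.sum_insert (by simp [h12, h13, h14]), Finset.sum_insert (by simp [h23, h24]),
      Finset.sum_pair h34]
    ring
  have h3 : ∑ i ∈ ({i₁,i₂,i₃,i₄} : Finset (Fin n)), |g i| = |g i₁| + |g i₂| + |g i₃| + |g i₄| := by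
    rw [Finset.sum_insert (by simp [h12, h13, h14]), Finset.sum_insert (by simp [h23, h24]),
      Finset.sum_pair h34]
    ring
  rw [h1, h2, h3]
  omega

theorem stmt2 {m n : ℕ} (A : Matrix (Fin m) (Fin n) ℤ)
    (x y : Fin n → ℤ) (hx : zeroOne x) (hy : zeroOne y)
    (hfib : A.mulVec x = A.mulVec y) (hne : x ≠ y)
    (i₁ i₂ i₃ i₄ : Fin n)
    (h12 : i₁ ≠ i₂) (h13 : i₁ ≠ i₃) (h14 : i₁ ≠ i₄)
    (h23 : i₂ ≠ i₃) (h24 : i₂ ≠ i₄) (h34 : i₃ ≠ i₄)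
    (hpat : (x i₁ > y i₁ ∧ x i₂ > y i₂ ∧ x i₃ < y i₃ ∧ x i₄ ≤ y i₄) ∨
            (y i₁ > x i₁ ∧ y i₂ > x i₂ ∧ y i₃ < x i₃ ∧ y i₄ ≤ x i₄))
    (hz : isMove A (e i₃ + e i₄ - e i₁ - e i₂)) :
    (zeroOne (x + (e i₃ + e i₄ - e i₁ - e i₂)) ∧
       A.mulVec (x + (e i₃ + e i₄ - e i₁ - e i₂)) = A.mulVec y ∧
       l1 (x + (e i₃ + e i₄ - e i₁ - e i₂) - y) < l1 (x - y)) ∨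
    (zeroOne (y - (e i₃ + e i₄ - e i₁ - e i₂)) ∧
       A.mulVec (y - (e i₃ + e i₄ - e i₁ - e i₂)) = A.mulVec x ∧
       l1 (x - (y - (e i₃ + e i₄ - e i₁ - e i₂))) < l1 (x - y)) ∨
    (zeroOne (y + (e i₃ + e i₄ - e i₁ - e i₂)) ∧
       A.mulVec (y + (e i₃ + e i₄ - e i₁ - e i₂)) = A.mulVec x ∧
       l1 (x - (y + (e i₃ + e i₄ - e i₁ - e i₂))) < l1 (x - y)) ∨
    (zeroOne (x - (e i₃ + e i₄ - e i₁ - e i₂)) ∧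
       A.mulVec (x - (e i₃ + e i₄ - e i₁ - e i₂)) = A.mulVec y ∧
       l1 (x - (e i₃ + e i₄ - e i₁ - e i₂) - y) < l1 (x - y)) := by
  have h21 := h12.symm
  have h31 := h13.symm
  have h41 := h14.symm
  have h32 := h23.symm
  have h42 := h24.symm
  have h43 := h34.symm
  have hz' : A.mulVec (e i₃ + e i₄ - e i₁ - e i₂) = 0 := hz
  have hx1 := hx i₁; have hx2 := hx i₂; have hx3 := hx i₃; have hx4 := hx i₄
  have hy1 := hy i₁; have hy2 := hy i₂; have hy3 := hy i₃; have hy4 := hy i₄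
  rcases hpat with ⟨hp1, hp2, hp3, hp4⟩ | ⟨hp1, hp2, hp3, hp4⟩
  · -- x i₁ = 1, y i₁ = 0, x i₂ = 1, y i₂ = 0, x i₃ = 0, y i₃ = 1
    have hv1 : x i₁ = 1 ∧ y i₁ = 0 := by omega
    have hv2 : x i₂ = 1 ∧ y i₂ = 0 := by omega
    have hv3 : x i₃ = 0 ∧ y i₃ = 1 := by omega
    rcases hy4 with hY4 | hY4
    · -- y i₄ = 0 ⇒ x i₄ = 0, use x + z
      have hX4 : x i₄ = 0 := by omega
      left
      refine ⟨?_, ?_, ?_⟩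
      · intro i
        simp only [Pi.add_apply, Pi.sub_apply, e]
        rcases eq_or_ne i i₁ with rfl | e1
        · simp only [if_pos rfl, if_neg h13, if_neg h14, if_neg h12]; omega
        rcases eq_or_ne i i₂ with rfl | e2
        · simp only [if_pos rfl, if_neg h23, if_neg h24, if_neg h21]; omega
        rcases eq_or_ne i i₃ with rfl | e3
        · simp only [if_pos rfl, if_neg h34, if_neg h31, if_neg h32]; omega
        rcases eq_or_ne i i₄ with rfl | e4
        · simp only [if_pos rfl, if_neg h43, if_neg h41, if_neg h42]; omega
        · have := hx i
          simp only [if_neg e1, if_neg e2, if_neg e3, if_neg e4]; omega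
      · rw [Matrix.mulVec_add, hz', add_zero, hfib]
      · apply l1_lt_aux _ _ i₁ i₂ i₃ i₄ h12 h13 h14 h23 h24 h34
        · intro i e1 e2 e3 e4
          simp only [Pi.add_apply, Pi.sub_apply, e, if_neg e1, if_neg e2, if_neg e3, if_neg e4]
          ring
        · simp only [Pi.add_apply, Pi.sub_apply, e, if_true, eq_self_iff_true,
            if_neg h12, if_neg h13, if_neg h14, if_neg h21, if_neg h23, if_neg h24,
            if_neg h31, if_neg h32, if_neg h34, if_neg h41, if_neg h42, if_neg h43,
            hv1.1, hv1.2, hv2.1, hv2.2, hv3.1, hv3.2, hX4, hY4]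
          norm_num
    · -- y i₄ = 1, use y - z
      right; left
      refine ⟨?_, ?_, ?_⟩
      · intro i
        simp only [Pi.add_apply, Pi.sub_apply, e]
        rcases eq_or_ne i i₁ with rfl | e1
        · simp only [if_pos rfl, if_neg h13, if_neg h14, if_neg h12]; omega
        rcases eq_or_ne i i₂ with rfl | e2
        · simp only [if_pos rfl, if_neg h23, if_neg h24, if_neg h21]; omega
        rcases eq_or_ne i i₃ with rfl | e3
        · simp only [if_pos rfl, if_neg h34, if_neg h31, if_neg h32]; omega
        rcases eq_or_ne i i₄ with rfl | e4
        · simp only [if_pos rfl, if_neg h43, if_neg h41, if_neg h42]; omega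
        · have := hy i
          simp only [if_neg e1, if_neg e2, if_neg e3, if_neg e4]; omega
      · rw [Matrix.mulVec_sub, hz', sub_zero, hfib]
      · apply l1_lt_aux _ _ i₁ i₂ i₃ i₄ h12 h13 h14 h23 h24 h34
        · intro i e1 e2 e3 e4
          simp only [Pi.add_apply, Pi.sub_apply, e, if_neg e1, if_neg e2, if_neg e3, if_neg e4]
          ring
        · rcases hx4 with h | h <;>
          simp only [Pi.add_apply, Pi.sub_apply, e, if_true, eq_self_iff_true,
            if_neg h12, if_neg h13, if_neg h14, if_neg h21, if_neg h23, if_neg h24,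
            if_neg h31, if_neg h32, if_neg h34, if_neg h41, if_neg h42, if_neg h43,
            hv1.1, hv1.2, hv2.1, hv2.2, hv3.1, hv3.2, h, hY4] <;>
          norm_num
  · -- symmetric case: y i₁ = 1, x i₁ = 0, etc.
    have hv1 : y i₁ = 1 ∧ x i₁ = 0 := by omega
    have hv2 : y i₂ = 1 ∧ x i₂ = 0 := by omega
    have hv3 : y i₃ = 0 ∧ x i₃ = 1 := by omega
    rcases hx4 with hX4 | hX4
    · -- x i₄ = 0 ⇒ y i₄ = 0, use y + z
      have hY4 : y i₄ = 0 := by omega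
      right; right; left
      refine ⟨?_, ?_, ?_⟩
      · intro i
        simp only [Pi.add_apply, Pi.sub_apply, e]
        rcases eq_or_ne i i₁ with rfl | e1
        · simp only [if_pos rfl, if_neg h13, if_neg h14, if_neg h12]; omega
        rcases eq_or_ne i i₂ with rfl | e2
        · simp only [if_pos rfl, if_neg h23, if_neg h24, if_neg h21]; omega
        rcases eq_or_ne i i₃ with rfl | e3
        · simp only [if_pos rfl, if_neg h34, if_neg h31, if_neg h32]; omega
        rcases eq_or_ne i i₄ with rfl | e4
        · simp only [if_pos rfl, if_neg h43, if_neg h41, if_neg h42]; omega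
        · have := hy i
          simp only [if_neg e1, if_neg e2, if_neg e3, if_neg e4]; omega
      · rw [Matrix.mulVec_add, hz', add_zero, hfib]
      · apply l1_lt_aux _ _ i₁ i₂ i₃ i₄ h12 h13 h14 h23 h24 h34
        · intro i e1 e2 e3 e4
          simp only [Pi.add_apply, Pi.sub_apply, e, if_neg e1, if_neg e2, if_neg e3, if_neg e4]
          ring
        · simp only [Pi.add_apply, Pi.sub_apply, e, if_true, eq_self_iff_true,
            if_neg h12, if_neg h13, if_neg h14, if_neg h21, if_neg h23, if_neg h24,
            if_neg h31, if_neg h32, if_neg h34, if_neg h41, if_neg h42, if_neg h43,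
            hv1.1, hv1.2, hv2.1, hv2.2, hv3.1, hv3.2, hX4, hY4]
          norm_num
    · -- x i₄ = 1, use x - z
      right; right; right
      refine ⟨?_, ?_, ?_⟩
      · intro i
        simp only [Pi.add_apply, Pi.sub_apply, e]
        rcases eq_or_ne i i₁ with rfl | e1
        · simp only [if_pos rfl, if_neg h13, if_neg h14, if_neg h12]; omega
        rcases eq_or_ne i i₂ with rfl | e2
        · simp only [if_pos rfl, if_neg h23, if_neg h24, if_neg h21]; omega
        rcases eq_or_ne i i₃ with rfl | e3
        · simp only [if_pos rfl, if_neg h34, if_neg h31, if_neg h32]; omega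
        rcases eq_or_ne i i₄ with rfl | e4
        · simp only [if_pos rfl, if_neg h43, if_neg h41, if_neg h42]; omega
        · have := hx i
          simp only [if_neg e1, if_neg e2, if_neg e3, if_neg e4]; omega
      · rw [Matrix.mulVec_sub, hz', sub_zero, hfib]
      · apply l1_lt_aux _ _ i₁ i₂ i₃ i₄ h12 h13 h14 h23 h24 h34
        · intro i e1 e2 e3 e4
          simp only [Pi.add_apply, Pi.sub_apply, e, if_neg e1, if_neg e2, if_neg e3, if_neg e4]
          ring
        · rcases hy4 with h | h <;>
          simp only [Pi.add_apply, Pi.sub_apply, e, if_true, eq_self_iff_true,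
            if_neg h12, if_neg h13, if_neg h14, if_neg h21, if_neg h23, if_neg h24,
            if_neg h31, if_neg h32, if_neg h34, if_neg h41, if_neg h42, if_neg h43,
            hv1.1, hv1.2, hv2.1, hv2.2, hv3.1, hv3.2, h, hX4] <;>
          norm_num
end

section
/- There exists a distance reducing Markov basis consisting of square-free degree-two moves (moves of the form e_{i₃} + e_{i₄} − e_{i₁} − e_{i₂} with i₁,i₂,i₃,i₄ distinct) for a configuration A if and only if for every pair of distinct elements x, y of a common fiber there exist distinct cells i₁,i₂,i₃,i₄ with (after possibly swapping x, y) x(i₁) > y(i₁), x(i₂) > y(i₂), x(i₃) < y(i₃), and e_{i₃} + e_{i₄} − e_{i₁} − e_{i₂} a move of A. -/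
/-- square-free degree-two vector: e_{i₃} + e_{i₄} − e_{i₁} − e_{i₂} with distinct cells -/
def degTwo {n : ℕ} (z : Fin n → ℤ) : Prop :=
  ∃ i₁ i₂ i₃ i₄ : Fin n,
    i₁ ≠ i₂ ∧ i₁ ≠ i₃ ∧ i₁ ≠ i₄ ∧ i₂ ≠ i₃ ∧ i₂ ≠ i₄ ∧ i₃ ≠ i₄ ∧
    z = e i₃ + e i₄ - e i₁ - e i₂

/-- B is distance reducing for the configuration A -/
def distReducing {m n : ℕ} (A : Matrix (Fin m) (Fin n) ℤ) (B : Set (Fin n → ℤ)) : Prop :=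
  ∀ x y : Fin n → ℤ, (∀ i, 0 ≤ x i) → (∀ i, 0 ≤ y i) →
    A.mulVec x = A.mulVec y → x ≠ y →
    ∃ z ∈ B, ∃ ε : ℤ, (ε = 1 ∨ ε = -1) ∧
      (((∀ i, 0 ≤ (x + ε • z) i) ∧ l1 (x + ε • z - y) < l1 (x - y)) ∨
       ((∀ i, 0 ≤ (y + ε • z) i) ∧ l1 (x - (y + ε • z)) < l1 (x - y)))

lemma abs_sub_one_eq (a : ℤ) : |a - 1| - |a| = if 0 < a then -1 else 1 := by
  rcases abs_cases a with ⟨h1, h2⟩ | ⟨h1, h2⟩ <;>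
    rcases abs_cases (a - 1) with ⟨h3, h4⟩ | ⟨h3, h4⟩ <;> split_ifs <;> omega
lemma abs_add_one_eq (a : ℤ) : |a + 1| - |a| = if a < 0 then -1 else 1 := by
  rcases abs_cases a with ⟨h1, h2⟩ | ⟨h1, h2⟩ <;>
    rcases abs_cases (a + 1) with ⟨h3, h4⟩ | ⟨h3, h4⟩ <;> split_ifs <;> omega
lemma l1_diff {n : ℕ} (w : Fin n → ℤ) (i₁ i₂ i₃ i₄ : Fin n)
    (h12 : i₁ ≠ i₂) (h13 : i₁ ≠ i₃) (h14 : i₁ ≠ i₄) (h23 : i₂ ≠ i₃) (h24 : i₂ ≠ i₄)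
    (h34 : i₃ ≠ i₄) :
    l1 (w + (e i₃ + e i₄ - e i₁ - e i₂)) - l1 w =
      (|w i₁ - 1| - |w i₁|) + (|w i₂ - 1| - |w i₂|) +
      (|w i₃ + 1| - |w i₃|) + (|w i₄ + 1| - |w i₄|) := by
  set z : Fin n → ℤ := e i₃ + e i₄ - e i₁ - e i₂ with hz
  have hsum : l1 (w + z) - l1 w = ∑ i, (|w i + z i| - |w i|) := by
    unfold l1
    rw [← Finset.sum_sub_distrib]
    simp [Pi.add_apply]
  rw [hsum]
  have hsub : (∑ i ∈ ({i₁, i₂, i₃, i₄} : Finset (Fin n)), (|w i + z i| - |w i|))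
      = ∑ i, (|w i + z i| - |w i|) := by
    apply Finset.sum_subset (Finset.subset_univ _)
    intro i _ hi
    simp only [Finset.mem_insert, Finset.mem_singleton, not_or] at hi
    obtain ⟨n1, n2, n3, n4⟩ := hi
    have : z i = 0 := by simp [hz, e, n1, n2, n3, n4]
    simp [this]
  rw [← hsub]
  have m1 : i₁ ∉ ({i₂, i₃, i₄} : Finset (Fin n)) := by simp [h12, h13, h14]
  have m2 : i₂ ∉ ({i₃, i₄} : Finset (Fin n)) := by simp [h23, h24]
  have m3 : i₃ ∉ ({i₄} : Finset (Fin n)) := by simp [h34]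
  rw [show ({i₁, i₂, i₃, i₄} : Finset (Fin n)) = insert i₁ {i₂, i₃, i₄} from rfl,
    Finset.sum_insert m1, Finset.sum_insert m2, Finset.sum_insert m3, Finset.sum_singleton]
  have z1 : z i₁ = -1 := by simp [hz, e, h12, h13, h14]
  have z2 : z i₂ = -1 := by simp [hz, e, h12.symm, h23, h24]
  have z3 : z i₃ = 1 := by simp [hz, e, h13.symm, h23.symm, h34]
  have z4 : z i₄ = 1 := by simp [hz, e, h14.symm, h24.symm, h34.symm]
  rw [z1, z2, z3, z4]
  ring_nf

/-- at least three of the four sign conditions -/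
def three4 {n : ℕ} (w : Fin n → ℤ) (i₁ i₂ i₃ i₄ : Fin n) : Prop :=
  (0 < w i₁ ∧ 0 < w i₂ ∧ w i₃ < 0) ∨ (0 < w i₁ ∧ 0 < w i₂ ∧ w i₄ < 0) ∨
  (0 < w i₁ ∧ w i₃ < 0 ∧ w i₄ < 0) ∨ (0 < w i₂ ∧ w i₃ < 0 ∧ w i₄ < 0)
lemma key {n : ℕ} (w : Fin n → ℤ) (i₁ i₂ i₃ i₄ : Fin n)
    (h12 : i₁ ≠ i₂) (h13 : i₁ ≠ i₃) (h14 : i₁ ≠ i₄) (h23 : i₂ ≠ i₃) (h24 : i₂ ≠ i₄)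
    (h34 : i₃ ≠ i₄) (h : l1 (w + (e i₃ + e i₄ - e i₁ - e i₂)) < l1 w) :
    three4 w i₁ i₂ i₃ i₄ := by
  have hd := l1_diff w i₁ i₂ i₃ i₄ h12 h13 h14 h23 h24 h34
  rw [abs_sub_one_eq, abs_sub_one_eq, abs_add_one_eq, abs_add_one_eq] at hd
  unfold three4
  split_ifs at hd <;> omega
lemma dec {n : ℕ} (w : Fin n → ℤ) (i₁ i₂ i₃ i₄ : Fin n)
    (h12 : i₁ ≠ i₂) (h13 : i₁ ≠ i₃) (h14 : i₁ ≠ i₄) (h23 : i₂ ≠ i₃) (h24 : i₂ ≠ i₄)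
    (h34 : i₃ ≠ i₄) (h : three4 w i₁ i₂ i₃ i₄) :
    l1 (w + (e i₃ + e i₄ - e i₁ - e i₂)) < l1 w := by
  have hd := l1_diff w i₁ i₂ i₃ i₄ h12 h13 h14 h23 h24 h34
  rw [abs_sub_one_eq, abs_sub_one_eq, abs_add_one_eq, abs_add_one_eq] at hd
  unfold three4 at h
  split_ifs at hd <;> omega
lemma isMove_neg' {m n : ℕ} (A : Matrix (Fin m) (Fin n) ℤ) {z w : Fin n → ℤ}
    (h : isMove A z) (hw : w = -z) : isMove A w := by
  unfold isMove at h ⊢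
  rw [hw, Matrix.mulVec_neg, h, neg_zero]
lemma conclude {m n : ℕ} (A : Matrix (Fin m) (Fin n) ℤ) (x y : Fin n → ℤ)
    (i₁ i₂ i₃ i₄ : Fin n)
    (h12 : i₁ ≠ i₂) (h13 : i₁ ≠ i₃) (h14 : i₁ ≠ i₄) (h23 : i₂ ≠ i₃) (h24 : i₂ ≠ i₄)
    (h34 : i₃ ≠ i₄) (hm : isMove A (e i₃ + e i₄ - e i₁ - e i₂))
    (h : three4 (x - y) i₁ i₂ i₃ i₄) :
    ∃ j₁ j₂ j₃ j₄ : Fin n,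
      j₁ ≠ j₂ ∧ j₁ ≠ j₃ ∧ j₁ ≠ j₄ ∧ j₂ ≠ j₃ ∧ j₂ ≠ j₄ ∧ j₃ ≠ j₄ ∧
      isMove A (e j₃ + e j₄ - e j₁ - e j₂) ∧
      ((x j₁ > y j₁ ∧ x j₂ > y j₂ ∧ x j₃ < y j₃) ∨
       (y j₁ > x j₁ ∧ y j₂ > x j₂ ∧ y j₃ < x j₃)) := by
  unfold three4 at h
  simp only [Pi.sub_apply] at h
  rcases h with ⟨ha, hb, hc⟩ | ⟨ha, hb, hc⟩ | ⟨ha, hb, hc⟩ | ⟨ha, hb, hc⟩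
  · exact ⟨i₁, i₂, i₃, i₄, h12, h13, h14, h23, h24, h34, hm,
      Or.inl ⟨by omega, by omega, by omega⟩⟩
  · refine ⟨i₁, i₂, i₄, i₃, h12, h14, h13, h24, h23, h34.symm, ?_, 
      Or.inl ⟨by omega, by omega, by omega⟩⟩
    have : e i₄ + e i₃ - e i₁ - e i₂ = e i₃ + e i₄ - e i₁ - e i₂ := by
      rw [add_comm (e i₄) (e i₃)]
    rw [this]; exact hm
  · refine ⟨i₃, i₄, i₁, i₂, h34, h13.symm, h23.symm, h14.symm, h24.symm, h12, ?_,
      Or.inr ⟨by omega, by omega, by omega⟩⟩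
    exact isMove_neg' A hm (by abel)
  · refine ⟨i₃, i₄, i₂, i₁, h34, h23.symm, h13.symm, h24.symm, h14.symm, h12.symm, ?_,
      Or.inr ⟨by omega, by omega, by omega⟩⟩
    exact isMove_neg' A hm (by abel)
lemma main_step {m n : ℕ} (A : Matrix (Fin m) (Fin n) ℤ) (x y : Fin n → ℤ)
    (i₁ i₂ i₃ i₄ : Fin n)
    (h12 : i₁ ≠ i₂) (h13 : i₁ ≠ i₃) (h14 : i₁ ≠ i₄) (h23 : i₂ ≠ i₃) (h24 : i₂ ≠ i₄)
    (h34 : i₃ ≠ i₄) (hm : isMove A (e i₃ + e i₄ - e i₁ - e i₂))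
    (hdec : l1 ((x - y) + (e i₃ + e i₄ - e i₁ - e i₂)) < l1 (x - y)) :
    ∃ j₁ j₂ j₃ j₄ : Fin n,
      j₁ ≠ j₂ ∧ j₁ ≠ j₃ ∧ j₁ ≠ j₄ ∧ j₂ ≠ j₃ ∧ j₂ ≠ j₄ ∧ j₃ ≠ j₄ ∧
      isMove A (e j₃ + e j₄ - e j₁ - e j₂) ∧
      ((x j₁ > y j₁ ∧ x j₂ > y j₂ ∧ x j₃ < y j₃) ∨
       (y j₁ > x j₁ ∧ y j₂ > x j₂ ∧ y j₃ < x j₃)) :=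
  conclude A x y i₁ i₂ i₃ i₄ h12 h13 h14 h23 h24 h34 hm
    (key (x - y) i₁ i₂ i₃ i₄ h12 h13 h14 h23 h24 h34 hdec)

theorem stmt4 {m n : ℕ} (A : Matrix (Fin m) (Fin n) ℤ) :
    (∃ B : Set (Fin n → ℤ), B.Finite ∧ (∀ z ∈ B, isMove A z ∧ degTwo z) ∧
        distReducing A B) ↔
    (∀ x y : Fin n → ℤ, (∀ i, 0 ≤ x i) → (∀ i, 0 ≤ y i) →
      A.mulVec x = A.mulVec y → x ≠ y →
      ∃ i₁ i₂ i₃ i₄ : Fin n,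
        i₁ ≠ i₂ ∧ i₁ ≠ i₃ ∧ i₁ ≠ i₄ ∧ i₂ ≠ i₃ ∧ i₂ ≠ i₄ ∧ i₃ ≠ i₄ ∧
        isMove A (e i₃ + e i₄ - e i₁ - e i₂) ∧
        ((x i₁ > y i₁ ∧ x i₂ > y i₂ ∧ x i₃ < y i₃) ∨
         (y i₁ > x i₁ ∧ y i₂ > x i₂ ∧ y i₃ < x i₃))) := by
  constructor
  · rintro ⟨B, hBfin, hBmove, hBred⟩ x y hx hy hfib hne
    obtain ⟨z, hzB, ε, hε, hcase⟩ := hBred x y hx hy hfib hne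
    obtain ⟨hmove, i₁, i₂, i₃, i₄, h12, h13, h14, h23, h24, h34, hz⟩ := hBmove z hzB
    subst hz
    rcases hcase with ⟨-, hdec⟩ | ⟨-, hdec⟩ <;> rcases hε with rfl | rfl
    · rw [show x + (1 : ℤ) • (e i₃ + e i₄ - e i₁ - e i₂) - y
          = (x - y) + (e i₃ + e i₄ - e i₁ - e i₂) from by funext i; simp [e]; ring] at hdec
      exact main_step A x y i₁ i₂ i₃ i₄ h12 h13 h14 h23 h24 h34 hmove hdec
    · rw [show x + (-1 : ℤ) • (e i₃ + e i₄ - e i₁ - e i₂) - y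
          = (x - y) + (e i₁ + e i₂ - e i₃ - e i₄) from by funext i; simp [e]; ring] at hdec
      exact main_step A x y i₃ i₄ i₁ i₂ h34 h13.symm h23.symm h14.symm h24.symm h12
        (isMove_neg' A hmove (by abel)) hdec
    · rw [show x - (y + (1 : ℤ) • (e i₃ + e i₄ - e i₁ - e i₂))
          = (x - y) + (e i₁ + e i₂ - e i₃ - e i₄) from by funext i; simp [e]; ring] at hdec
      exact main_step A x y i₃ i₄ i₁ i₂ h34 h13.symm h23.symm h14.symm h24.symm h12
        (isMove_neg' A hmove (by abel)) hdec
    · rw [show x - (y + (-1 : ℤ) • (e i₃ + e i₄ - e i₁ - e i₂))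
          = (x - y) + (e i₃ + e i₄ - e i₁ - e i₂) from by funext i; simp [e]; ring] at hdec
      exact main_step A x y i₁ i₂ i₃ i₄ h12 h13 h14 h23 h24 h34 hmove hdec
  · intro H
    refine ⟨{z | isMove A z ∧ degTwo z}, ?_, fun z hz => hz, ?_⟩
    · apply Set.Finite.subset (Set.finite_range
        (fun p : Fin n × Fin n × Fin n × Fin n => e p.2.2.1 + e p.2.2.2 - e p.1 - e p.2.1))
      rintro z ⟨-, i₁, i₂, i₃, i₄, -, -, -, -, -, -, rfl⟩
      exact ⟨(i₁, i₂, i₃, i₄), rfl⟩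
    · intro x y hx hy hfib hne
      obtain ⟨i₁, i₂, i₃, i₄, h12, h13, h14, h23, h24, h34, hmove, hcase⟩ :=
        H x y hx hy hfib hne
      refine ⟨e i₃ + e i₄ - e i₁ - e i₂,
        ⟨hmove, i₁, i₂, i₃, i₄, h12, h13, h14, h23, h24, h34, rfl⟩, 1, Or.inl rfl, ?_⟩
      rcases hcase with ⟨ha, hb, hc⟩ | ⟨ha, hb, hc⟩
      · left
        constructor
        · intro i
          have hyi := hy i
          have hxi := hx i
          have hy1 := hy i₁
          have hy2 := hy i₂
          simp only [Pi.add_apply, Pi.smul_apply, Pi.sub_apply, smul_eq_mul, one_mul, e]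
          rcases eq_or_ne i i₁ with rfl | n1
          · simp [h12, h13, h14]; omega
          rcases eq_or_ne i i₂ with rfl | n2
          · simp [h12.symm, h23, h24]; omega
          · split_ifs <;> omega
        · rw [show x + (1 : ℤ) • (e i₃ + e i₄ - e i₁ - e i₂) - y
            = (x - y) + (e i₃ + e i₄ - e i₁ - e i₂) from by funext i; simp [e]; ring]
          apply dec (x - y) i₁ i₂ i₃ i₄ h12 h13 h14 h23 h24 h34
          exact Or.inl ⟨by simp [Pi.sub_apply]; omega, by simp [Pi.sub_apply]; omega,
            by simp [Pi.sub_apply]; omega⟩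
      · right
        constructor
        · intro i
          have hyi := hy i
          have hxi := hx i
          have hx1 := hx i₁
          have hx2 := hx i₂
          simp only [Pi.add_apply, Pi.smul_apply, Pi.sub_apply, smul_eq_mul, one_mul, e]
          rcases eq_or_ne i i₁ with rfl | n1
          · simp [h12, h13, h14]; omega
          rcases eq_or_ne i i₂ with rfl | n2
          · simp [h12.symm, h23, h24]; omega
          · split_ifs <;> omega
        · rw [show x - (y + (1 : ℤ) • (e i₃ + e i₄ - e i₁ - e i₂))
            = (x - y) + (e i₁ + e i₂ - e i₃ - e i₄) from by funext i; simp [e]; ring]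
          apply dec (x - y) i₃ i₄ i₁ i₂ h34 h13.symm h23.symm h14.symm h24.symm h12
          refine Or.inr (Or.inr (Or.inl ⟨?_, ?_, ?_⟩)) <;> simp [Pi.sub_apply] <;> omega
end

section
/- The set of basic moves {e_{(i,j)} + e_{(i',j')} − e_{(i,j')} − e_{(i',j)} : i ≠ i', j ≠ j'} connects any two I × J zero-one matrices having the same row sums and the same column sums; i.e., one can pass from one to the other by adding basic moves while all intermediate matrices remain zero-one with the same row and column sums. -/
/-- zero-one matrix -/
def zeroOneM {I J : ℕ} (x : Fin I → Fin J → ℤ) : Prop := ∀ i j, x i j = 0 ∨ x i j = 1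

/-- basic move: +1 at (i,j),(i',j') and −1 at (i,j'),(i',j), i ≠ i', j ≠ j' -/
def basicMove {I J : ℕ} (z : Fin I → Fin J → ℤ) : Prop :=
  ∃ (i i' : Fin I) (j j' : Fin J), i ≠ i' ∧ j ≠ j' ∧
    z = fun a b =>
      (if a = i ∧ b = j then (1:ℤ) else 0) + (if a = i' ∧ b = j' then 1 else 0)
      - (if a = i ∧ b = j' then 1 else 0) - (if a = i' ∧ b = j then 1 else 0)

/-- one step: add a basic move, staying zero-one -/
def basicStep {I J : ℕ} (x x' : Fin I → Fin J → ℤ) : Prop :=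
  zeroOneM x' ∧ ∃ z, basicMove z ∧ x' = x + z

/-- the basic move matrix -/
def mvM {I J : ℕ} (i i' : Fin I) (j j' : Fin J) : Fin I → Fin J → ℤ := fun a b =>
  (if a = i ∧ b = j then (1:ℤ) else 0) + (if a = i' ∧ b = j' then 1 else 0)
  - (if a = i ∧ b = j' then 1 else 0) - (if a = i' ∧ b = j then 1 else 0)

lemma mvM_basic {I J : ℕ} {i i' : Fin I} {j j' : Fin J} (hii : i ≠ i') (hjj : j ≠ j') :
    basicMove (mvM i i' j j') := ⟨i, i', j, j', hii, hjj, rfl⟩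

lemma mvM_row_sum {I J : ℕ} (i i' : Fin I) (j j' : Fin J) (a : Fin I) :
    ∑ b, mvM i i' j j' a b = 0 := by
  simp [mvM, Finset.sum_sub_distrib, Finset.sum_add_distrib, ite_and]

lemma mvM_col_sum {I J : ℕ} (i i' : Fin I) (j j' : Fin J) (b : Fin J) :
    ∑ a, mvM i i' j j' a b = 0 := by
  simp [mvM, Finset.sum_sub_distrib, Finset.sum_add_distrib, ite_and]

lemma mvM_cancel {I J : ℕ} (i i' : Fin I) (j j' : Fin J) (u : Fin I → Fin J → ℤ) :
    (u + mvM i i' j j') + mvM i i' j' j = u := by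
  funext a b
  simp only [Pi.add_apply, mvM]
  ring

/-- value of the "flip" `u + mvM i i' j' j` -/
lemma flip_apply {I J : ℕ} (u : Fin I → Fin J → ℤ) (i i' : Fin I) (j j' : Fin J)
    (hii : i ≠ i') (hjj : j ≠ j') (a : Fin I) (b : Fin J) :
    (u + mvM i i' j' j) a b =
      if a = i ∧ b = j then u i j - 1
      else if a = i ∧ b = j' then u i j' + 1
      else if a = i' ∧ b = j then u i' j + 1
      else if a = i' ∧ b = j' then u i' j' - 1
      else u a b := by
  have hii' := hii.symm
  have hjj' := hjj.symm
  simp only [Pi.add_apply, mvM]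
  rcases eq_or_ne a i with rfl | hai <;> rcases eq_or_ne a i' with rfl | hai' <;>
    rcases eq_or_ne b j with rfl | hbj <;> rcases eq_or_ne b j' with rfl | hbj' <;>
    (try simp_all) <;> (try ring)

lemma sum_four {I J : ℕ} (g : Fin I → Fin J → ℤ) (i i' : Fin I) (j j' : Fin J)
    (hii : i ≠ i') (hjj : j ≠ j')
    (h0 : ∀ a b, (a ≠ i ∧ a ≠ i') ∨ (b ≠ j ∧ b ≠ j') → g a b = 0) :
    ∑ a, ∑ b, g a b = g i j + g i j' + g i' j + g i' j' := by
  have hrow : ∀ a, ∑ b, g a b = g a j + g a j' := by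
    intro a
    rw [show (Finset.univ : Finset (Fin J)) = insert j (insert j' (Finset.univ \ {j, j'})) by
      ext b; by_cases hb : b = j <;> by_cases hb' : b = j' <;> simp [hb, hb']]
    rw [Finset.sum_insert (by simp [hjj]), Finset.sum_insert (by simp)]
    have : ∑ b ∈ Finset.univ \ {j, j'}, g a b = 0 := by
      apply Finset.sum_eq_zero
      intro b hb
      simp at hb
      exact h0 a b (Or.inr ⟨hb.1, hb.2⟩)
    rw [this]; ring
  have hout : ∀ a, a ≠ i → a ≠ i' → ∑ b, g a b = 0 := by
    intro a ha ha'
    exact Finset.sum_eq_zero fun b _ => h0 a b (Or.inl ⟨ha, ha'⟩)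
  rw [show (Finset.univ : Finset (Fin I)) = insert i (insert i' (Finset.univ \ {i, i'})) by
      ext a; by_cases ha : a = i <;> by_cases ha' : a = i' <;> simp [ha, ha']]
  rw [Finset.sum_insert (by simp [hii]), Finset.sum_insert (by simp)]
  have : ∑ a ∈ Finset.univ \ {i, i'}, ∑ b, g a b = 0 := by
    apply Finset.sum_eq_zero
    intro a ha
    simp at ha
    exact hout a ha.1 ha.2
  rw [this, hrow i, hrow i']; ring

lemma exists_pos {n : ℕ} (f : Fin n → ℤ) (h : ∑ j, f j = 0) (j0 : Fin n) (h0 : f j0 < 0) :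
    ∃ j, 0 < f j := by
  by_contra hc
  push_neg at hc
  have : ∑ j, f j < ∑ _j : Fin n, (0:ℤ) :=
    Finset.sum_lt_sum (fun i _ => hc i) ⟨j0, Finset.mem_univ _, h0⟩
  simp [h] at this

lemma exists_rect {I J : ℕ} (d : Fin I → Fin J → ℤ)
    (hval : ∀ i j, d i j = -1 ∨ d i j = 0 ∨ d i j = 1)
    (hrow : ∀ i, ∑ j, d i j = 0) (hcol : ∀ j, ∑ i, d i j = 0)
    (hne : ∃ i j, d i j ≠ 0) :
    ∃ i i' j j', d i j = 1 ∧ d i j' = -1 ∧ d i' j' = 1 ∧ d i' j ≤ 0 := by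
  by_contra hcon
  push_neg at hcon
  obtain ⟨i0, j0, h0⟩ := hne
  have h1 : ∃ i1 j1, d i1 j1 = 1 := by
    rcases hval i0 j0 with h | h | h
    · obtain ⟨j1, hj1⟩ := exists_pos (d i0) (hrow i0) j0 (by omega)
      exact ⟨i0, j1, by rcases hval i0 j1 with h'|h'|h' <;> omega⟩
    · exact absurd h h0
    · exact ⟨i0, j0, h⟩
  obtain ⟨i1, j1, h1⟩ := h1
  set S : Finset (Fin I) := Finset.univ.filter (fun i => d i j1 = 1) with hSdef
  have hi1S : i1 ∈ S := by simp [hSdef, h1]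
  have key : ∀ j, j ≠ j1 → 0 ≤ ∑ i ∈ S, d i j := by
    intro j hj
    by_cases hneg : ∃ i ∈ S, d i j = -1
    · obtain ⟨i2, hi2S, hi2⟩ := hneg
      have hi2j1 : d i2 j1 = 1 := by simpa [hSdef] using hi2S
      have hclosed : ∀ i', i' ∉ S → d i' j ≤ 0 := by
        intro i' hi'
        rcases hval i' j with h' | h' | h'
        · omega
        · omega
        · exfalso
          have := hcon i2 i' j1 j hi2j1 hi2 h'
          have h'' : d i' j1 = 1 := by rcases hval i' j1 with h''|h''|h'' <;> omega
          exact hi' (by simp [hSdef, h''])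
      have hsplit : ∑ i ∈ S, d i j + ∑ i ∈ Sᶜ, d i j = 0 := by
        rw [Finset.sum_add_sum_compl]
        exact hcol j
      have : ∑ i ∈ Sᶜ, d i j ≤ 0 :=
        Finset.sum_nonpos fun i hi => hclosed i (by simpa using hi)
      omega
    · push_neg at hneg
      apply Finset.sum_nonneg
      intro i hi
      have := hneg i hi
      rcases hval i j with h'|h'|h' <;> omega
  have hj1 : ∑ i ∈ S, d i j1 = S.card := by
    rw [Finset.sum_congr rfl (fun i hi => by simpa [hSdef] using hi)]
    simp
  have htot : ∑ j, ∑ i ∈ S, d i j = 0 := by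
    rw [Finset.sum_comm]
    exact Finset.sum_eq_zero fun i _ => hrow i
  have hsplit2 : ∑ i ∈ S, d i j1 + ∑ j ∈ Finset.univ.erase j1, ∑ i ∈ S, d i j = 0 := by
    rw [Finset.add_sum_erase _ (fun j => ∑ i ∈ S, d i j) (Finset.mem_univ j1)]
    exact htot
  have hrest : 0 ≤ ∑ j ∈ Finset.univ.erase j1, ∑ i ∈ S, d i j :=
    Finset.sum_nonneg fun j hj => key j (Finset.ne_of_mem_erase hj)
  have hcard : 0 < S.card := Finset.card_pos.2 ⟨i1, hi1S⟩
  have : (0:ℤ) < S.card := by exact_mod_cast hcard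
  omega

theorem stmt6 {I J : ℕ} (x y : Fin I → Fin J → ℤ)
    (hx : zeroOneM x) (hy : zeroOneM y)
    (hrow : ∀ i, ∑ j, x i j = ∑ j, y i j)
    (hcol : ∀ j, ∑ i, x i j = ∑ i, y i j) :
    Relation.ReflTransGen basicStep x y := by
  suffices h : ∀ n : ℕ, ∀ x y : Fin I → Fin J → ℤ, zeroOneM x → zeroOneM y →
      (∀ i, ∑ j, x i j = ∑ j, y i j) → (∀ j, ∑ i, x i j = ∑ i, y i j) →
      (∑ i, ∑ j, |x i j - y i j|).toNat ≤ n → Relation.ReflTransGen basicStep x y by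
    exact h _ x y hx hy hrow hcol le_rfl
  clear hx hy hrow hcol x y
  intro n
  induction n with
  | zero =>
    intro x y hx hy hrow hcol hm
    have hnn : ∀ a ∈ (Finset.univ : Finset (Fin I)), 0 ≤ ∑ b, |x a b - y a b| :=
      fun a _ => Finset.sum_nonneg fun b _ => abs_nonneg _
    have h0 : ∑ a, ∑ b, |x a b - y a b| = 0 := by
      have := Finset.sum_nonneg hnn
      omega
    have hxy : x = y := by
      funext a b
      have h1 : ∑ b, |x a b - y a b| = 0 :=
        (Finset.sum_eq_zero_iff_of_nonneg hnn).1 h0 a (Finset.mem_univ a)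
      have h2 : |x a b - y a b| = 0 :=
        (Finset.sum_eq_zero_iff_of_nonneg (fun b _ => abs_nonneg _)).1 h1 b (Finset.mem_univ b)
      have := abs_eq_zero.1 h2
      omega
    rw [hxy]
  | succ n ih =>
    intro x y hx hy hrow hcol hm
    by_cases hxy : x = y
    · rw [hxy]
    · have hval : ∀ i j, x i j - y i j = -1 ∨ x i j - y i j = 0 ∨ x i j - y i j = 1 := by
        intro i j; rcases hx i j with h|h <;> rcases hy i j with h'|h' <;> omega
      have hdrow : ∀ i, ∑ j, (x i j - y i j) = 0 := by
        intro i; rw [Finset.sum_sub_distrib, hrow i]; ring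
      have hdcol : ∀ j, ∑ i, (x i j - y i j) = 0 := by
        intro j; rw [Finset.sum_sub_distrib, hcol j]; ring
      have hne : ∃ i j, x i j - y i j ≠ 0 := by
        by_contra hc
        push_neg at hc
        exact hxy (funext fun a => funext fun b => by have := hc a b; omega)
      obtain ⟨i, i', j, j', hdij, hdij', hdi'j', hdi'j⟩ :=
        exists_rect (fun a b => x a b - y a b) hval hdrow hdcol hne
      have hxij : x i j = 1 := by rcases hx i j with h|h <;> rcases hy i j with h'|h' <;> omega
      have hyij : y i j = 0 := by rcases hx i j with h|h <;> rcases hy i j with h'|h' <;> omega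
      have hxij' : x i j' = 0 := by rcases hx i j' with h|h <;> rcases hy i j' with h'|h' <;> omega
      have hyij' : y i j' = 1 := by rcases hx i j' with h|h <;> rcases hy i j' with h'|h' <;> omega
      have hxi'j' : x i' j' = 1 := by rcases hx i' j' with h|h <;> rcases hy i' j' with h'|h' <;> omega
      have hyi'j' : y i' j' = 0 := by rcases hx i' j' with h|h <;> rcases hy i' j' with h'|h' <;> omega
      have hii : i ≠ i' := by rintro rfl; omega
      have hjj : j ≠ j' := by rintro rfl; omega
      by_cases hcase : x i' j = 0
      · -- move on x
        set x' := x + mvM i i' j' j with hx'def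
        have happ := flip_apply x i i' j j' hii hjj
        simp only [← hx'def] at happ
        have e1 : x' i j = 0 := by rw [happ i j]; simp [hxij]
        have e2 : x' i j' = 1 := by rw [happ i j']; simp [hxij', hjj.symm, hjj]
        have e3 : x' i' j = 1 := by rw [happ i' j]; simp [hcase, hii.symm, hii]
        have e4 : x' i' j' = 0 := by rw [happ i' j']; simp [hxi'j', hii.symm, hii, hjj.symm, hjj]
        have hsame : ∀ a b, (a ≠ i ∧ a ≠ i') ∨ (b ≠ j ∧ b ≠ j') → x' a b = x a b := by
          intro a b h
          rw [happ a b]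
          split_ifs with h1 h2 h3 h4 <;> first | rfl | tauto
        have hx' : zeroOneM x' := by
          intro a b
          rcases eq_or_ne a i with rfl | hai
          · rcases eq_or_ne b j with rfl | hbj
            · rw [e1]; left; rfl
            · rcases eq_or_ne b j' with rfl | hbj'
              · rw [e2]; right; rfl
              · rw [hsame _ _ (Or.inr ⟨hbj, hbj'⟩)]; exact hx _ _
          · rcases eq_or_ne a i' with rfl | hai'
            · rcases eq_or_ne b j with rfl | hbj
              · rw [e3]; right; rfl
              · rcases eq_or_ne b j' with rfl | hbj'
                · rw [e4]; left; rfl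
                · rw [hsame _ _ (Or.inr ⟨hbj, hbj'⟩)]; exact hx _ _
            · rw [hsame _ _ (Or.inl ⟨hai, hai'⟩)]; exact hx _ _
        have hstep : basicStep x x' := ⟨hx', mvM i i' j' j, mvM_basic hii (Ne.symm hjj), rfl⟩
        have hrow' : ∀ a, ∑ b, x' a b = ∑ b, y a b := by
          intro a
          have : ∑ b, x' a b = ∑ b, x a b + ∑ b, mvM i i' j' j a b := by
            rw [← Finset.sum_add_distrib]; rfl
          rw [this, mvM_row_sum, hrow a]; ring
        have hcol' : ∀ b, ∑ a, x' a b = ∑ a, y a b := by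
          intro b
          have : ∑ a, x' a b = ∑ a, x a b + ∑ a, mvM i i' j' j a b := by
            rw [← Finset.sum_add_distrib]; rfl
          rw [this, mvM_col_sum, hcol b]; ring
        have hgsum := sum_four (fun a b => |x' a b - y a b| - |x a b - y a b|) i i' j j' hii hjj
          (fun a b h => by show |x' a b - y a b| - |x a b - y a b| = 0; rw [hsame a b h]; ring)
        simp only [Finset.sum_sub_distrib] at hgsum
        have hg1 : |x' i j - y i j| - |x i j - y i j| = -1 := by
          rw [e1, hxij, hyij]; norm_num
        have hg2 : |x' i j' - y i j'| - |x i j' - y i j'| = -1 := by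
          rw [e2, hxij', hyij']; norm_num
        have hg4 : |x' i' j' - y i' j'| - |x i' j' - y i' j'| = -1 := by
          rw [e4, hxi'j', hyi'j']; norm_num
        have hg3 : |x' i' j - y i' j| - |x i' j - y i' j| ≤ 1 := by
          rcases hy i' j with h|h <;> rw [e3, hcase, h] <;> norm_num
        have hnn' : 0 ≤ ∑ a, ∑ b, |x' a b - y a b| :=
          Finset.sum_nonneg fun a _ => Finset.sum_nonneg fun b _ => abs_nonneg _
        have hdec : ∑ a, ∑ b, |x' a b - y a b| + 2 ≤ ∑ a, ∑ b, |x a b - y a b| := by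
          linarith
        have hm' : (∑ a, ∑ b, |x' a b - y a b|).toNat ≤ n := by omega
        exact Relation.ReflTransGen.head hstep (ih x' y hx' hy hrow' hcol' hm')
      · -- move on y
        have hxi'j : x i' j = 1 := by rcases hx i' j with h|h; exacts [absurd h hcase, h]
        have hyi'j : y i' j = 1 := by rcases hy i' j with h|h <;> omega
        set y' := y + mvM i i' j j' with hy'def
        have happ := flip_apply y i i' j' j hii (Ne.symm hjj)
        simp only [← hy'def] at happ
        have e1 : y' i j = 1 := by rw [happ i j]; simp [hyij, hjj.symm, hjj]
        have e2 : y' i j' = 0 := by rw [happ i j']; simp [hyij']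
        have e3 : y' i' j = 0 := by rw [happ i' j]; simp [hyi'j, hii.symm, hii, hjj.symm, hjj]
        have e4 : y' i' j' = 1 := by rw [happ i' j']; simp [hyi'j', hii.symm, hii]
        have hsame : ∀ a b, (a ≠ i ∧ a ≠ i') ∨ (b ≠ j ∧ b ≠ j') → y' a b = y a b := by
          intro a b h
          rw [happ a b]
          split_ifs with h1 h2 h3 h4 <;> first | rfl | tauto
        have hy' : zeroOneM y' := by
          intro a b
          rcases eq_or_ne a i with rfl | hai
          · rcases eq_or_ne b j with rfl | hbj
            · rw [e1]; right; rfl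
            · rcases eq_or_ne b j' with rfl | hbj'
              · rw [e2]; left; rfl
              · rw [hsame _ _ (Or.inr ⟨hbj, hbj'⟩)]; exact hy _ _
          · rcases eq_or_ne a i' with rfl | hai'
            · rcases eq_or_ne b j with rfl | hbj
              · rw [e3]; left; rfl
              · rcases eq_or_ne b j' with rfl | hbj'
                · rw [e4]; right; rfl
                · rw [hsame _ _ (Or.inr ⟨hbj, hbj'⟩)]; exact hy _ _
            · rw [hsame _ _ (Or.inl ⟨hai, hai'⟩)]; exact hy _ _
        have hstep : basicStep y' y :=
          ⟨hy, mvM i i' j' j, mvM_basic hii (Ne.symm hjj), (mvM_cancel i i' j j' y).symm⟩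
        have hrow' : ∀ a, ∑ b, x a b = ∑ b, y' a b := by
          intro a
          have : ∑ b, y' a b = ∑ b, y a b + ∑ b, mvM i i' j j' a b := by
            rw [← Finset.sum_add_distrib]; rfl
          rw [this, mvM_row_sum, hrow a]; ring
        have hcol' : ∀ b, ∑ a, x a b = ∑ a, y' a b := by
          intro b
          have : ∑ a, y' a b = ∑ a, y a b + ∑ a, mvM i i' j j' a b := by
            rw [← Finset.sum_add_distrib]; rfl
          rw [this, mvM_col_sum, hcol b]; ring
        have hgsum := sum_four (fun a b => |x a b - y' a b| - |x a b - y a b|) i i' j j' hii hjj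
          (fun a b h => by show |x a b - y' a b| - |x a b - y a b| = 0; rw [hsame a b h]; ring)
        simp only [Finset.sum_sub_distrib] at hgsum
        have hg1 : |x i j - y' i j| - |x i j - y i j| = -1 := by
          rw [e1, hxij, hyij]; norm_num
        have hg2 : |x i j' - y' i j'| - |x i j' - y i j'| = -1 := by
          rw [e2, hxij', hyij']; norm_num
        have hg3 : |x i' j - y' i' j| - |x i' j - y i' j| = 1 := by
          rw [e3, hxi'j, hyi'j]; norm_num
        have hg4 : |x i' j' - y' i' j'| - |x i' j' - y i' j'| = -1 := by
          rw [e4, hxi'j', hyi'j']; norm_num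
        have hnn' : 0 ≤ ∑ a, ∑ b, |x a b - y' a b| :=
          Finset.sum_nonneg fun a _ => Finset.sum_nonneg fun b _ => abs_nonneg _
        have hdec : ∑ a, ∑ b, |x a b - y' a b| + 2 ≤ ∑ a, ∑ b, |x a b - y a b| := by
          linarith
        have hm' : (∑ a, ∑ b, |x a b - y' a b|).toNat ≤ n := by omega
        exact Relation.ReflTransGen.tail (ih x y' hx hy' hrow' hcol' hm') hstep
end

section
/- Every integer matrix with all row sums and column sums equal to zero whose positive part and negative part each have support forming a cycle structure (i.e., every primitive move of the two-way independence model) is, up to permutation of rows and columns and sign, a loop of some degree r ≥ 2: it has value +1 at cells (i_k, j_k), value −1 at cells (i_k, j_{k+1 mod r}) for distinct i₁,…,i_r and distinct j₁,…,j_r, and 0 elsewhere. -/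
/-- move for the two-way independence model: all row and column sums zero -/
def isMoveM {I J : ℕ} (z : Fin I → Fin J → ℤ) : Prop :=
  (∀ a, ∑ b, z a b = 0) ∧ (∀ b, ∑ a, z a b = 0)

/-- no sign cancellation in any cell -/
def conformalM {I J : ℕ} (z₁ z₂ : Fin I → Fin J → ℤ) : Prop :=
  ∀ a b, 0 ≤ z₁ a b * z₂ a b

/-- primitive move (Graver basis element) of the independence model -/
def primitiveM {I J : ℕ} (z : Fin I → Fin J → ℤ) : Prop :=
  isMoveM z ∧ z ≠ 0 ∧
    ¬ ∃ z₁ z₂ : Fin I → Fin J → ℤ, isMoveM z₁ ∧ isMoveM z₂ ∧ z₁ ≠ 0 ∧ z₂ ≠ 0 ∧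
        conformalM z₁ z₂ ∧ z = z₁ + z₂

/-- degree-r loop: +1 at (i_k, j_k), −1 at (i_k, j_{k+1}) (indices mod r) -/
def loop {I J r : ℕ} [NeZero r] (i : Fin r → Fin I) (j : Fin r → Fin J) :
    Fin I → Fin J → ℤ :=
  fun a b => (∑ k : Fin r, if a = i k ∧ b = j k then (1:ℤ) else 0)
           - (∑ k : Fin r, if a = i k ∧ b = j (k + 1) then (1:ℤ) else 0)

section Aux

variable {I J : ℕ}

/-- ℕ-indexed periodic cycle in the sign pattern of z -/
def IsCycleN (z : Fin I → Fin J → ℤ) (r : ℕ) (i : ℕ → Fin I) (j : ℕ → Fin J) : Prop :=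
  0 < r ∧ (∀ k, i (k + r) = i k) ∧ (∀ k, j (k + r) = j k) ∧
    (∀ k, 0 < z (i k) (j k)) ∧ (∀ k, z (i k) (j (k + 1)) < 0)

lemma periodic_mod {α : Type*} {f : ℕ → α} {r : ℕ} (hr : 0 < r)
    (hf : ∀ k, f (k + r) = f k) : ∀ k, f (k % r) = f k := by
  intro k
  induction k using Nat.strong_induction_on with
  | _ k ih =>
    rcases lt_or_ge k r with h | h
    · rw [Nat.mod_eq_of_lt h]
    · have h1 : k = (k - r) + r := by omega
      rw [h1, hf, Nat.add_mod_right]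
      exact ih (k - r) (by omega)

lemma exists_neg_in_row {z : Fin I → Fin J → ℤ} (hrow : ∀ a, ∑ b, z a b = 0)
    {a : Fin I} {b : Fin J} (h : 0 < z a b) : ∃ b', z a b' < 0 := by
  by_contra hc
  push_neg at hc
  have := Finset.single_le_sum (f := z a) (fun b' _ => hc b') (Finset.mem_univ b)
  rw [hrow a] at this
  omega

lemma exists_pos_in_col {z : Fin I → Fin J → ℤ} (hcol : ∀ b, ∑ a, z a b = 0)
    {a : Fin I} {b : Fin J} (h : z a b < 0) : ∃ a', 0 < z a' b := by
  by_contra hc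
  push_neg at hc
  have : ∑ a', z a' b < ∑ _a' : Fin I, (0:ℤ) :=
    Finset.sum_lt_sum (fun a' _ => hc a') ⟨a, Finset.mem_univ a, h⟩
  rw [hcol b] at this
  simp at this

lemma exists_pos_in_row {z : Fin I → Fin J → ℤ} (hrow : ∀ a, ∑ b, z a b = 0)
    {a : Fin I} {b : Fin J} (h : z a b < 0) : ∃ b', 0 < z a b' := by
  by_contra hc
  push_neg at hc
  have : ∑ b', z a b' < ∑ _b' : Fin J, (0:ℤ) :=
    Finset.sum_lt_sum (fun b' _ => hc b') ⟨b, Finset.mem_univ b, h⟩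
  rw [hrow a] at this
  simp at this

/-- from a move and a positive cell, some cycle exists -/
lemma exists_cycle {z : Fin I → Fin J → ℤ} (hm : isMoveM z)
    {a₀ : Fin I} {b₀ : Fin J} (h₀ : 0 < z a₀ b₀) :
    ∃ r i j, IsCycleN z r i j := by
  classical
  obtain ⟨hrow, hcol⟩ := hm
  have step : ∀ p : {p : Fin I × Fin J // 0 < z p.1 p.2},
      ∃ q : {p : Fin I × Fin J // 0 < z p.1 p.2}, z p.val.1 q.val.2 < 0 := by
    rintro ⟨⟨a, b⟩, h⟩
    obtain ⟨b', hb'⟩ := exists_neg_in_row hrow h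
    obtain ⟨a', ha'⟩ := exists_pos_in_col hcol hb'
    exact ⟨⟨(a', b'), ha'⟩, hb'⟩
  choose f hf using step
  set s : ℕ → {p : Fin I × Fin J // 0 < z p.1 p.2} :=
    fun k => f^[k] ⟨(a₀, b₀), h₀⟩ with hsdef
  have hs : ∀ k, s (k + 1) = f (s k) := fun k => Function.iterate_succ_apply' f k _
  set a : ℕ → Fin I := fun k => (s k).val.1 with hadef
  set b : ℕ → Fin J := fun k => (s k).val.2 with hbdef
  have hpos : ∀ k, 0 < z (a k) (b k) := fun k => (s k).prop
  have hneg : ∀ k, z (a k) (b (k + 1)) < 0 := by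
    intro k
    have h1 := hf (s k)
    have h2 : b (k + 1) = (f (s k)).val.2 := by rw [hbdef]; simp only; rw [hs k]
    rw [h2]
    exact h1
  obtain ⟨m', n', hmn', heq'⟩ := Finite.exists_ne_map_eq_of_infinite s
  -- wlog m < n
  obtain ⟨m, n, hmn, heq⟩ : ∃ m n, m < n ∧ s m = s n := by
    rcases lt_or_gt_of_ne hmn' with h | h
    · exact ⟨m', n', h, heq'⟩
    · exact ⟨n', m', h, heq'.symm⟩
  set r := n - m with hrdef
  have hr : 0 < r := by omega
  refine ⟨r, fun k => a (m + k % r), fun k => b (m + k % r), hr, ?_, ?_, ?_, ?_⟩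
  · intro k; beta_reduce; rw [Nat.add_mod_right]
  · intro k; beta_reduce; rw [Nat.add_mod_right]
  · intro k; exact hpos _
  · intro k
    beta_reduce
    have hmod : (k + 1) % r = (k % r + 1) % r := by
      conv_lhs => rw [← Nat.mod_add_mod]
    have ht : k % r < r := Nat.mod_lt _ hr
    rcases Nat.lt_or_ge (k % r + 1) r with h | h
    · rw [hmod, Nat.mod_eq_of_lt h]
      exact hneg _
    · have h2 : k % r + 1 = r := by omega
      have h3 : (k + 1) % r = 0 := by rw [hmod, h2, Nat.mod_self]
      rw [h3]
      have hbm : b (m + 0) = b (m + k % r + 1) := by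
        have : m + k % r + 1 = n := by omega
        rw [this]
        simp only [Nat.add_zero]
        rw [hbdef]; simp only; rw [heq]
      rw [hbm]
      exact hneg _

/-- a minimal cycle has distinct rows and columns within a period, and r ≥ 2 -/
lemma minimal_cycle {z : Fin I → Fin J → ℤ} (h : ∃ r i j, IsCycleN z r i j) :
    ∃ r i j, IsCycleN z r i j ∧ 2 ≤ r ∧
      (∀ p q, p < r → q < r → i p = i q → p = q) ∧
      (∀ p q, p < r → q < r → j p = j q → p = q) := by
  classical
  obtain ⟨i, j, hc⟩ := Nat.find_spec h
  set r := Nat.find h with hrdef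
  have hmin : ∀ r' < r, ¬ ∃ i j, IsCycleN z r' i j := fun r' h' => Nat.find_min h h'
  obtain ⟨hr, hip, hjp, hpos, hneg⟩ := hc
  -- r ≥ 2
  have hr2 : 2 ≤ r := by
    by_contra hcon
    have hr1 : r = 1 := by omega
    have h1 : j 1 = j 0 := by
      have := hjp 0
      rw [hr1] at this
      simpa using this
    have := hneg 0
    rw [h1] at this
    have := hpos 0
    omega
  -- helper: mod step
  have hmod : ∀ (r' k : ℕ), (k + 1) % r' = (k % r' + 1) % r' := by
    intro r' k
    conv_lhs => rw [← Nat.mod_add_mod]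
  -- row injectivity: general cut lemma
  have hcuti : ∀ p q, p < q → q < r → i p ≠ i q := by
    rintro p q hpq hq hie
    set r' := q - p with hr'def
    have hr' : 0 < r' := by omega
    refine hmin r' (by omega) ⟨fun k => i (p + k % r'),
      fun k => if k % r' = 0 then j q else j (p + k % r'), hr', ?_, ?_, ?_, ?_⟩
    · intro k; beta_reduce; rw [Nat.add_mod_right]
    · intro k; beta_reduce; rw [Nat.add_mod_right]
    · intro k
      beta_reduce
      by_cases h0 : k % r' = 0
      · rw [if_pos h0, h0]
        simpa [hie] using hpos q
      · rw [if_neg h0]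
        exact hpos _
    · intro k
      beta_reduce
      have ht : k % r' < r' := Nat.mod_lt _ hr'
      rcases Nat.lt_or_ge (k % r' + 1) r' with hlt | hge
      · have h1 : (k + 1) % r' = k % r' + 1 := by rw [hmod, Nat.mod_eq_of_lt hlt]
        have e : p + (k % r' + 1) = (p + k % r') + 1 := by omega
        rw [h1, if_neg (by omega), e]
        exact hneg _
      · have h2 : k % r' + 1 = r' := by omega
        have h1 : (k + 1) % r' = 0 := by rw [hmod, h2, Nat.mod_self]
        rw [h1, if_pos rfl]
        have e : p + k % r' + 1 = q := by omega
        have := hneg (p + k % r')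
        rwa [e] at this
  have hcutj : ∀ p q, p < q → q < r → j p ≠ j q := by
    rintro p q hpq hq hje
    set r' := q - p with hr'def
    have hr' : 0 < r' := by omega
    refine hmin r' (by omega) ⟨fun k => i (p + k % r'),
      fun k => j (p + k % r'), hr', ?_, ?_, ?_, ?_⟩
    · intro k; beta_reduce; rw [Nat.add_mod_right]
    · intro k; beta_reduce; rw [Nat.add_mod_right]
    · intro k; exact hpos _
    · intro k
      beta_reduce
      have ht : k % r' < r' := Nat.mod_lt _ hr'
      rcases Nat.lt_or_ge (k % r' + 1) r' with hlt | hge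
      · have h1 : (k + 1) % r' = k % r' + 1 := by rw [hmod, Nat.mod_eq_of_lt hlt]
        have e : p + (k % r' + 1) = (p + k % r') + 1 := by omega
        rw [h1, e]
        exact hneg _
      · have h2 : k % r' + 1 = r' := by omega
        have h1 : (k + 1) % r' = 0 := by rw [hmod, h2, Nat.mod_self]
        rw [h1, Nat.add_zero, hje]
        have e : p + k % r' + 1 = q := by omega
        have := hneg (p + k % r')
        rwa [e] at this
  refine ⟨r, i, j, ⟨hr, hip, hjp, hpos, hneg⟩, hr2, ?_, ?_⟩
  · intro p q hp hq hie
    by_contra hne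
    rcases lt_or_gt_of_ne hne with h' | h'
    · exact hcuti p q h' hq hie
    · exact hcuti q p h' hp hie.symm
  · intro p q hp hq hje
    by_contra hne
    rcases lt_or_gt_of_ne hne with h' | h'
    · exact hcutj p q h' hq hje
    · exact hcutj q p h' hp hje.symm

lemma fin_succ_ne {r : ℕ} [NeZero r] (hr : 2 ≤ r) (k : Fin r) : k + 1 ≠ k := by
  intro h
  have h1 := congrArg Fin.val h
  rw [Fin.val_add, Fin.val_one'] at h1
  have h2 : 1 % r = 1 := Nat.mod_eq_of_lt (by omega)
  rw [h2] at h1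
  have hk : k.val < r := k.isLt
  rcases Nat.lt_or_ge (k.val + 1) r with h3 | h3
  · rw [Nat.mod_eq_of_lt h3] at h1; omega
  · have h4 : k.val + 1 = r := by omega
    rw [h4, Nat.mod_self] at h1
    omega

lemma loop_aux {I J r : ℕ} [NeZero r] (hr : 2 ≤ r) (z : Fin I → Fin J → ℤ)
    (i : Fin r → Fin I) (j : Fin r → Fin J)
    (hi : Function.Injective i) (hj : Function.Injective j)
    (hpos : ∀ k, 0 < z (i k) (j k)) (hneg : ∀ k, z (i k) (j (k + 1)) < 0) :
    isMoveM (loop i j) ∧ loop i j ≠ 0 ∧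
      (∀ a b, 0 ≤ loop i j a b * (z a b - loop i j a b)) := by
  classical
  have hsucc : ∀ k : Fin r, k + 1 ≠ k := fin_succ_ne hr
  -- value lemmas
  have hval1 : ∀ a b, (∃ k, a = i k ∧ b = j k) → loop i j a b = 1 := by
    rintro a b ⟨k₀, hk₀a, hk₀b⟩
    have hS1 : ∑ k, (if a = i k ∧ b = j k then (1:ℤ) else 0) = 1 := by
      have hcond : ∀ k : Fin r, (a = i k ∧ b = j k) ↔ k = k₀ := by
        intro k
        constructor
        · rintro ⟨h1, _⟩; exact hi (h1.symm.trans hk₀a)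
        · rintro rfl; exact ⟨hk₀a, hk₀b⟩
      simp only [hcond]
      simp
    have hS2 : ∑ k, (if a = i k ∧ b = j (k + 1) then (1:ℤ) else 0) = 0 := by
      apply Finset.sum_eq_zero
      intro k _
      rw [if_neg]
      rintro ⟨h1, h2⟩
      have hk : k = k₀ := hi (h1.symm.trans hk₀a)
      subst hk
      exact hsucc k (hj (h2.symm.trans hk₀b))
    show (∑ k, (if a = i k ∧ b = j k then (1:ℤ) else 0))
        - (∑ k, (if a = i k ∧ b = j (k + 1) then (1:ℤ) else 0)) = 1
    rw [hS1, hS2]; ring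
  have hval2 : ∀ a b, (¬ ∃ k, a = i k ∧ b = j k) → (∃ k, a = i k ∧ b = j (k + 1)) →
      loop i j a b = -1 := by
    rintro a b hnp ⟨k₀, hk₀a, hk₀b⟩
    have hS1 : ∑ k, (if a = i k ∧ b = j k then (1:ℤ) else 0) = 0 := by
      apply Finset.sum_eq_zero
      intro k _
      rw [if_neg]
      exact fun hc => hnp ⟨k, hc⟩
    have hS2 : ∑ k, (if a = i k ∧ b = j (k + 1) then (1:ℤ) else 0) = 1 := by
      have hcond : ∀ k : Fin r, (a = i k ∧ b = j (k + 1)) ↔ k = k₀ := by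
        intro k
        constructor
        · rintro ⟨h1, _⟩; exact hi (h1.symm.trans hk₀a)
        · rintro rfl; exact ⟨hk₀a, hk₀b⟩
      simp only [hcond]
      simp
    show (∑ k, (if a = i k ∧ b = j k then (1:ℤ) else 0))
        - (∑ k, (if a = i k ∧ b = j (k + 1) then (1:ℤ) else 0)) = -1
    rw [hS1, hS2]; ring
  have hval0 : ∀ a b, (¬ ∃ k, a = i k ∧ b = j k) → (¬ ∃ k, a = i k ∧ b = j (k + 1)) →
      loop i j a b = 0 := by
    intro a b hnp hnn
    have hS1 : ∑ k, (if a = i k ∧ b = j k then (1:ℤ) else 0) = 0 :=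
      Finset.sum_eq_zero fun k _ => if_neg fun hc => hnp ⟨k, hc⟩
    have hS2 : ∑ k, (if a = i k ∧ b = j (k + 1) then (1:ℤ) else 0) = 0 :=
      Finset.sum_eq_zero fun k _ => if_neg fun hc => hnn ⟨k, hc⟩
    show (∑ k, (if a = i k ∧ b = j k then (1:ℤ) else 0))
        - (∑ k, (if a = i k ∧ b = j (k + 1) then (1:ℤ) else 0)) = 0
    rw [hS1, hS2]; ring
  have hr0 : 0 < r := by omega
  refine ⟨⟨?_, ?_⟩, ?_, ?_⟩
  · -- row sums
    intro a
    show ∑ b, ((∑ k, (if a = i k ∧ b = j k then (1:ℤ) else 0))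
        - (∑ k, (if a = i k ∧ b = j (k + 1) then (1:ℤ) else 0))) = 0
    rw [Finset.sum_sub_distrib]
    have e1 : ∀ (k : Fin r) (c : Fin J),
        ∑ b, (if a = i k ∧ b = c then (1:ℤ) else 0) = if a = i k then 1 else 0 := by
      intro k c
      by_cases h : a = i k
      · simp [h]
      · simp [h]
    have c1 : (∑ b, ∑ k : Fin r, (if a = i k ∧ b = j k then (1:ℤ) else 0))
        = ∑ k : Fin r, ∑ b, (if a = i k ∧ b = j k then (1:ℤ) else 0) := Finset.sum_comm
    have c2 : (∑ b, ∑ k : Fin r, (if a = i k ∧ b = j (k + 1) then (1:ℤ) else 0))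
        = ∑ k : Fin r, ∑ b, (if a = i k ∧ b = j (k + 1) then (1:ℤ) else 0) := Finset.sum_comm
    rw [c1, c2]
    calc (∑ k : Fin r, ∑ b, (if a = i k ∧ b = j k then (1:ℤ) else 0))
          - (∑ k : Fin r, ∑ b, (if a = i k ∧ b = j (k + 1) then (1:ℤ) else 0))
        = (∑ k : Fin r, if a = i k then (1:ℤ) else 0)
          - (∑ k : Fin r, if a = i k then (1:ℤ) else 0) := by
          rw [Finset.sum_congr rfl fun k _ => e1 k (j k),
            Finset.sum_congr rfl fun k _ => e1 k (j (k + 1))]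
      _ = 0 := by ring
  · -- column sums
    intro b
    show ∑ a, ((∑ k, (if a = i k ∧ b = j k then (1:ℤ) else 0))
        - (∑ k, (if a = i k ∧ b = j (k + 1) then (1:ℤ) else 0))) = 0
    rw [Finset.sum_sub_distrib]
    have c1 : (∑ a, ∑ k : Fin r, (if a = i k ∧ b = j k then (1:ℤ) else 0))
        = ∑ k : Fin r, ∑ a, (if a = i k ∧ b = j k then (1:ℤ) else 0) := Finset.sum_comm
    have c2 : (∑ a, ∑ k : Fin r, (if a = i k ∧ b = j (k + 1) then (1:ℤ) else 0))
        = ∑ k : Fin r, ∑ a, (if a = i k ∧ b = j (k + 1) then (1:ℤ) else 0) := Finset.sum_comm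
    rw [c1, c2]
    have e1 : ∀ (k : Fin r) (c : Fin J),
        ∑ a, (if a = i k ∧ b = c then (1:ℤ) else 0) = if b = c then 1 else 0 := by
      intro k c
      by_cases h : b = c
      · simp [h]
      · simp [h]
    have e2 : (∑ k : Fin r, if b = j (k + 1) then (1:ℤ) else 0)
        = ∑ k : Fin r, if b = j k then (1:ℤ) else 0 :=
      Fintype.sum_equiv (Equiv.addRight (1 : Fin r)) _ _ (fun k => rfl)
    calc (∑ k : Fin r, ∑ a, (if a = i k ∧ b = j k then (1:ℤ) else 0))
          - (∑ k : Fin r, ∑ a, (if a = i k ∧ b = j (k + 1) then (1:ℤ) else 0))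
        = (∑ k : Fin r, if b = j k then (1:ℤ) else 0)
          - (∑ k : Fin r, if b = j (k + 1) then (1:ℤ) else 0) := by
          rw [Finset.sum_congr rfl fun k _ => e1 k (j k),
            Finset.sum_congr rfl fun k _ => e1 k (j (k + 1))]
      _ = 0 := by rw [e2]; ring
  · -- nonzero
    intro hc
    have h0 : loop i j (i ⟨0, hr0⟩) (j ⟨0, hr0⟩) = 1 := hval1 _ _ ⟨⟨0, hr0⟩, rfl, rfl⟩
    rw [hc] at h0
    simp at h0
  · -- conformality
    intro a b
    by_cases hp : ∃ k, a = i k ∧ b = j k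
    · rw [hval1 a b hp]
      obtain ⟨k, rfl, rfl⟩ := hp
      have := hpos k
      nlinarith
    · by_cases hn : ∃ k, a = i k ∧ b = j (k + 1)
      · rw [hval2 a b hp hn]
        obtain ⟨k, rfl, rfl⟩ := hn
        have := hneg k
        nlinarith
      · rw [hval0 a b hp hn]
        ring_nf
        exact le_refl 0

end Aux

theorem stmt8 {I J : ℕ} (z : Fin I → Fin J → ℤ) (hz : primitiveM z) :
    ∃ (r : ℕ) (i : Fin (r + 2) → Fin I) (j : Fin (r + 2) → Fin J),
      Function.Injective i ∧ Function.Injective j ∧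
      (z = loop i j ∨ z = -loop i j) := by
  classical
  obtain ⟨⟨hrow, hcol⟩, hzne, hprim⟩ := hz
  obtain ⟨a₀, b₀, h₀⟩ : ∃ a b, 0 < z a b := by
    have hex : ∃ a b, z a b ≠ 0 := by
      by_contra hc
      push_neg at hc
      exact hzne (funext fun a => funext fun b => hc a b)
    obtain ⟨a, b, hab⟩ := hex
    rcases lt_or_gt_of_ne hab with h | h
    · obtain ⟨b', hb'⟩ := exists_pos_in_row hrow h
      exact ⟨a, b', hb'⟩
    · exact ⟨a, b, h⟩
  obtain ⟨r, iN, jN, ⟨hr0, hip, hjp, hpos, hneg⟩, hr2, hinji, hinjj⟩ :=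
    minimal_cycle (exists_cycle ⟨hrow, hcol⟩ h₀)
  obtain ⟨r', rfl⟩ : ∃ k, r = k + 2 := ⟨r - 2, by omega⟩
  have hmodj : ∀ t, jN (t % (r' + 2)) = jN t := periodic_mod (by omega) hjp
  refine ⟨r', fun k => iN k.val, fun k => jN k.val, ?_, ?_, Or.inl ?_⟩
  · intro k l hkl
    exact Fin.ext (hinji _ _ k.isLt l.isLt hkl)
  · intro k l hkl
    exact Fin.ext (hinjj _ _ k.isLt l.isLt hkl)
  -- translate cycle data to Fin indices
  set iF : Fin (r' + 2) → Fin I := fun k => iN k.val with hiFdef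
  set jF : Fin (r' + 2) → Fin J := fun k => jN k.val with hjFdef
  have hiFinj : Function.Injective iF := by
    intro k l hkl
    exact Fin.ext (hinji _ _ k.isLt l.isLt hkl)
  have hjFinj : Function.Injective jF := by
    intro k l hkl
    exact Fin.ext (hinjj _ _ k.isLt l.isLt hkl)
  have hj1 : ∀ k : Fin (r' + 2), jF (k + 1) = jN (k.val + 1) := by
    intro k
    show jN ((k + 1 : Fin (r' + 2)).val) = jN (k.val + 1)
    rw [Fin.val_add, Fin.val_one', Nat.mod_eq_of_lt (show 1 < r' + 2 by omega)]
    exact hmodj (k.val + 1)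
  have hposF : ∀ k : Fin (r' + 2), 0 < z (iF k) (jF k) := fun k => hpos k.val
  have hnegF : ∀ k : Fin (r' + 2), z (iF k) (jF (k + 1)) < 0 := by
    intro k
    rw [hj1 k]
    exact hneg k.val
  obtain ⟨hLmove, hLne, hconf⟩ := loop_aux (by omega) z iF jF hiFinj hjFinj hposF hnegF
  -- primitivity forces z = loop iF jF
  by_cases hzL : z - loop iF jF = 0
  · exact (sub_eq_zero.mp hzL)
  · exfalso
    apply hprim
    refine ⟨loop iF jF, z - loop iF jF, hLmove, ?_, hLne, hzL, ?_, by ring⟩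
    · constructor
      · intro a
        have : ∀ b, (z - loop iF jF) a b = z a b - loop iF jF a b := fun b => rfl
        simp only [this]
        rw [Finset.sum_sub_distrib, hrow a, hLmove.1 a]
        ring
      · intro b
        have : ∀ a, (z - loop iF jF) a b = z a b - loop iF jF a b := fun a => rfl
        simp only [this]
        rw [Finset.sum_sub_distrib, hcol b, hLmove.2 b]
        ring
    · intro a b
      have he : (z - loop iF jF) a b = z a b - loop iF jF a b := rfl
      rw [he]
      exact hconf a b
end

section
/- Any two 3 × 3 Latin squares, viewed as 3 × 3 × 3 zero-one tables with all line sums equal to 1 (orthogonal array representation), are connected by a sequence of degree-6 moves (two parallel slices each being a degree-3 loop with opposite signs) with all intermediate tables themselves being 3 × 3 Latin squares. -/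
def zeroOneT (x : Fin 3 → Fin 3 → Fin 3 → ℤ) : Prop :=
  ∀ i j k, x i j k = 0 ∨ x i j k = 1

/-- 3×3 Latin square in orthogonal array representation: all line sums equal one -/
def latinT (x : Fin 3 → Fin 3 → Fin 3 → ℤ) : Prop :=
  zeroOneT x ∧ (∀ i j, ∑ k, x i j k = 1) ∧ (∀ i k, ∑ j, x i j k = 1) ∧
  (∀ j k, ∑ i, x i j k = 1)

def deg3Loop (w : Fin 3 → Fin 3 → ℤ) : Prop :=
  (∀ a, ∑ b, w a b = 0) ∧ (∀ b, ∑ a, w a b = 0) ∧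
  (∀ a b, w a b = -1 ∨ w a b = 0 ∨ w a b = 1) ∧
  (∑ a, ∑ b, max (w a b) 0) = 3

/-- degree-6 move: two parallel slices, each a degree-3 loop, with opposite signs -/
def deg6T (z : Fin 3 → Fin 3 → Fin 3 → ℤ) : Prop :=
  (∃ k₁ k₂ : Fin 3, k₁ ≠ k₂ ∧ ∃ w, deg3Loop w ∧
    z = fun a b c => if c = k₁ then w a b else if c = k₂ then -w a b else 0) ∨
  (∃ j₁ j₂ : Fin 3, j₁ ≠ j₂ ∧ ∃ w, deg3Loop w ∧
    z = fun a b c => if b = j₁ then w a c else if b = j₂ then -w a c else 0) ∨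
  (∃ i₁ i₂ : Fin 3, i₁ ≠ i₂ ∧ ∃ w, deg3Loop w ∧
    z = fun a b c => if a = i₁ then w b c else if a = i₂ then -w b c else 0)

/-- one step: add a degree-6 move, staying a Latin square -/
def latinStep (x x' : Fin 3 → Fin 3 → Fin 3 → ℤ) : Prop :=
  latinT x' ∧ ∃ z, deg6T z ∧ x' = x + z

def ind (f : Fin 3 → Fin 3 → Fin 3) : Fin 3 → Fin 3 → Fin 3 → ℤ :=
  fun i j k => if f i j = k then 1 else 0
def Latinf (f : Fin 3 → Fin 3 → Fin 3) : Prop :=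
  (∀ i, Function.Injective (f i)) ∧ (∀ j, Function.Injective (fun i => f i j))

lemma sum_ind_unique {g : Fin 3 → Fin 3} (hg : Function.Injective g) (k : Fin 3) :
    ∑ j, (if g j = k then (1:ℤ) else 0) = 1 := by
  obtain ⟨j₀, hj⟩ := (Finite.injective_iff_bijective.mp hg).surjective k
  rw [Finset.sum_eq_single j₀]
  · simp [hj]
  · intro b _ hb
    simp only [ite_eq_right_iff]
    intro e; exact absurd (hg (e.trans hj.symm)) hb
  · simp

lemma latinT_ind {f : Fin 3 → Fin 3 → Fin 3} (hf : Latinf f) : latinT (ind f) := by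
  refine ⟨fun i j k => ?_, fun i j => ?_, fun i k => ?_, fun j k => ?_⟩
  · unfold ind; split <;> simp
  · simp [ind, Finset.sum_ite_eq]
  · exact sum_ind_unique (hf.1 i) k
  · exact sum_ind_unique (hf.2 j) k

lemma symbolSwapStep {f : Fin 3 → Fin 3 → Fin 3} (hf : Latinf f) {a b : Fin 3}
    (hab : a ≠ b) :
    latinStep (ind f) (ind (fun i j => Equiv.swap a b (f i j))) := by
  set g : Fin 3 → Fin 3 → Fin 3 := fun i j => Equiv.swap a b (f i j) with hg
  have hgf : Latinf g := ⟨fun i => (Equiv.swap a b).injective.comp (hf.1 i),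
    fun j => (Equiv.swap a b).injective.comp (hf.2 j)⟩
  set w : Fin 3 → Fin 3 → ℤ :=
    fun i j => (if f i j = b then 1 else 0) - (if f i j = a then 1 else 0) with hw
  have hloop : deg3Loop w := by
    refine ⟨fun i => ?_, fun j => ?_, fun i j => ?_, ?_⟩
    · rw [Finset.sum_sub_distrib, sum_ind_unique (hf.1 i) b, sum_ind_unique (hf.1 i) a]
      ring
    · rw [Finset.sum_sub_distrib, sum_ind_unique (hf.2 j) b, sum_ind_unique (hf.2 j) a]
      ring
    · simp only [hw]; split_ifs <;> omega
    · have hpt : ∀ i j, max (w i j) 0 = if f i j = b then 1 else 0 := by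
        intro i j
        simp only [hw]
        split_ifs with h1 h2 h2 <;> simp_all
      simp only [hpt]
      rw [Finset.sum_congr rfl fun i _ => sum_ind_unique (hf.1 i) b]
      simp
  refine ⟨latinT_ind hgf,
    (fun p q c => if c = a then w p q else if c = b then -w p q else 0), Or.inl ⟨a, b, hab, w, hloop, rfl⟩, ?_⟩
  funext i j k
  simp only [ind, Pi.add_apply, hg, hw]
  by_cases hva : f i j = a
  · rw [hva, Equiv.swap_apply_left]
    by_cases hka : k = a <;> by_cases hkb : k = b <;> simp_all <;> omega
  · by_cases hvb : f i j = b
    · rw [hvb, Equiv.swap_apply_right]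
      by_cases hka : k = a <;> by_cases hkb : k = b <;> simp_all <;> omega
    · rw [Equiv.swap_apply_of_ne_of_ne hva hvb]
      by_cases hka : k = a <;> by_cases hkb : k = b <;> simp_all <;> omega

lemma rowSwapStep {f : Fin 3 → Fin 3 → Fin 3} (hf : Latinf f) {a b : Fin 3}
    (hab : a ≠ b) :
    latinStep (ind f) (ind (fun i j => f (Equiv.swap a b i) j)) := by
  set g : Fin 3 → Fin 3 → Fin 3 := fun i j => f (Equiv.swap a b i) j with hg
  have hgf : Latinf g := ⟨fun i => hf.1 _, fun j => (hf.2 j).comp (Equiv.swap a b).injective⟩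
  have hcol : ∀ j, f a j ≠ f b j := fun j e => hab (hf.2 j e)
  set w : Fin 3 → Fin 3 → ℤ :=
    fun j c => (if f b j = c then 1 else 0) - (if f a j = c then 1 else 0) with hw
  have hloop : deg3Loop w := by
    refine ⟨fun j => ?_, fun c => ?_, fun j c => ?_, ?_⟩
    · simp [hw, Finset.sum_sub_distrib, Finset.sum_ite_eq]
    · rw [Finset.sum_sub_distrib, sum_ind_unique (hf.1 b) c, sum_ind_unique (hf.1 a) c]
      ring
    · simp only [hw]; split_ifs <;> omega
    · have hpt : ∀ j c, max (w j c) 0 = if f b j = c then 1 else 0 := by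
        intro j c
        simp only [hw]
        split_ifs with h1 h2 h2 <;> first | (exfalso; exact hcol j (h2.trans h1.symm)) | simp_all
      simp only [hpt]
      simp [Finset.sum_ite_eq]
  refine ⟨latinT_ind hgf,
    (fun p q c => if p = a then w q c else if p = b then -w q c else 0), Or.inr (Or.inr ⟨a, b, hab, w, hloop, rfl⟩), ?_⟩
  funext i j k
  simp only [ind, Pi.add_apply, hg, hw]
  by_cases hia : i = a
  · subst hia; rw [Equiv.swap_apply_left]; simp
  · by_cases hib : i = b
    · subst hib; rw [Equiv.swap_apply_right]; simp [hia]
    · rw [Equiv.swap_apply_of_ne_of_ne hia hib]; simp [hia, hib]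

lemma symbolPerm {f : Fin 3 → Fin 3 → Fin 3} (hf : Latinf f) (π : Equiv.Perm (Fin 3)) :
    Relation.ReflTransGen latinStep (ind f) (ind fun i j => π (f i j)) := by
  refine Equiv.Perm.swap_induction_on π Relation.ReflTransGen.refl fun π' x y hxy ih => ih.tail ?_
  have hst := symbolSwapStep (f := fun i j => π' (f i j))
    ⟨fun i => π'.injective.comp (hf.1 i), fun j => π'.injective.comp (hf.2 j)⟩ hxy
  simpa [Equiv.Perm.mul_apply] using hst

lemma rowPerm {f : Fin 3 → Fin 3 → Fin 3} (hf : Latinf f) (π : Equiv.Perm (Fin 3)) :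
    Relation.ReflTransGen latinStep (ind f) (ind fun i j => f (π i) j) := by
  refine Equiv.Perm.swap_induction_on' π Relation.ReflTransGen.refl fun π' x y hxy ih => ih.tail ?_
  have hst := rowSwapStep (f := fun i j => f (π' i) j)
    ⟨fun i => hf.1 _, fun j => (hf.2 j).comp π'.injective⟩ hxy
  simpa [Equiv.Perm.mul_apply] using hst

lemma deg6_neg {z : Fin 3 → Fin 3 → Fin 3 → ℤ} (h : deg6T z) : deg6T (-z) := by
  rcases h with ⟨k1, k2, hne, w, hw, rfl⟩ | ⟨k1, k2, hne, w, hw, rfl⟩ | ⟨k1, k2, hne, w, hw, rfl⟩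
  · exact Or.inl ⟨k2, k1, hne.symm, w, hw, by
      funext a b c; simp only [Pi.neg_apply]
      by_cases h1 : c = k1 <;> by_cases h2 : c = k2 <;> simp_all⟩
  · exact Or.inr (Or.inl ⟨k2, k1, hne.symm, w, hw, by
      funext a b c; simp only [Pi.neg_apply]
      by_cases h1 : b = k1 <;> by_cases h2 : b = k2 <;> simp_all⟩)
  · exact Or.inr (Or.inr ⟨k2, k1, hne.symm, w, hw, by
      funext a b c; simp only [Pi.neg_apply]
      by_cases h1 : a = k1 <;> by_cases h2 : a = k2 <;> simp_all⟩)

lemma step_symm {x x' : Fin 3 → Fin 3 → Fin 3 → ℤ} (hx : latinT x) (h : latinStep x x') :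
    latinStep x' x := by
  obtain ⟨hx', z, hz, rfl⟩ := h
  exact ⟨hx, -z, deg6_neg hz, by funext i j k; simp⟩

lemma rtg_aux {x y : Fin 3 → Fin 3 → Fin 3 → ℤ}
    (h : Relation.ReflTransGen latinStep x y) (hx : latinT x) :
    latinT y ∧ Relation.ReflTransGen latinStep y x := by
  induction h with
  | refl => exact ⟨hx, .refl⟩
  | tail _ hbc ih => exact ⟨hbc.1, .head (step_symm ih.1 hbc) ih.2⟩

lemma uniq {h : Fin 3 → Fin 3 → Fin 3} (hh : Latinf h) (h0 : ∀ j, h 0 j = j)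
    (h10 : h 1 0 = 2) : h = fun i j => j - i := by
  have ne_row : ∀ i j j', j ≠ j' → h i j ≠ h i j' := fun i j j' hjj' e => hjj' (hh.1 i e)
  have ne_col : ∀ i i' j, i ≠ i' → h i j ≠ h i' j := fun i i' j hii' e => hii' (hh.2 j e)
  have tri : ∀ v : Fin 3, v = 0 ∨ v = 1 ∨ v = 2 := by decide
  have e11 : h 1 1 = 0 := by
    have a := ne_row 1 1 0 (by decide); rw [h10] at a
    have b := ne_col 1 0 1 (by decide); rw [h0 1] at b
    rcases tri (h 1 1) with e | e | e <;> simp_all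
  have e12 : h 1 2 = 1 := by
    have a := ne_row 1 2 0 (by decide); rw [h10] at a
    have b := ne_row 1 2 1 (by decide); rw [e11] at b
    rcases tri (h 1 2) with e | e | e <;> simp_all
  have e20 : h 2 0 = 1 := by
    have a := ne_col 2 0 0 (by decide); rw [h0 0] at a
    have b := ne_col 2 1 0 (by decide); rw [h10] at b
    rcases tri (h 2 0) with e | e | e <;> simp_all
  have e21 : h 2 1 = 2 := by
    have a := ne_col 2 0 1 (by decide); rw [h0 1] at a
    have b := ne_col 2 1 1 (by decide); rw [e11] at b
    rcases tri (h 2 1) with e | e | e <;> simp_all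
  have e22 : h 2 2 = 0 := by
    have a := ne_col 2 0 2 (by decide); rw [h0 2] at a
    have b := ne_col 2 1 2 (by decide); rw [e12] at b
    rcases tri (h 2 2) with e | e | e <;> simp_all
  funext i j
  fin_cases i <;> fin_cases j <;>
    simp_all [show h 0 0 = 0 from h0 0, show h 0 1 = 1 from h0 1, show h 0 2 = 2 from h0 2] <;>
    decide

lemma reach_c {f : Fin 3 → Fin 3 → Fin 3} (hf : Latinf f) :
    Relation.ReflTransGen latinStep (ind f) (ind fun i j => j - i) := by
  set ρ : Fin 3 ≃ Fin 3 := Equiv.ofBijective (f 0) (Finite.injective_iff_bijective.mp (hf.1 0))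
    with hρ
  set f₁ : Fin 3 → Fin 3 → Fin 3 := fun i j => ρ.symm (f i j) with hf₁def
  have p1 : Relation.ReflTransGen latinStep (ind f) (ind f₁) := symbolPerm hf ρ.symm
  have hf₁ : Latinf f₁ := ⟨fun i => ρ.symm.injective.comp (hf.1 i),
    fun j => ρ.symm.injective.comp (hf.2 j)⟩
  have h0 : ∀ j, f₁ 0 j = j := fun j => ρ.symm_apply_apply j
  have tri : ∀ v : Fin 3, v = 0 ∨ v = 1 ∨ v = 2 := by decide
  by_cases h1 : f₁ 1 0 = 2
  · rw [uniq hf₁ h0 h1] at p1; exact p1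
  · have hne0 : f₁ 1 0 ≠ 0 := by
      exact fun e : f₁ 1 0 = 0 =>
        (show (1:Fin 3) ≠ 0 by decide) (hf₁.2 0 (e.trans (h0 0).symm))
    have h1' : f₁ 1 0 = 1 := by rcases tri (f₁ 1 0) with e | e | e <;> simp_all
    set f₂ : Fin 3 → Fin 3 → Fin 3 := fun i j => f₁ (Equiv.swap 1 2 i) j with hf₂def
    have p2 : Relation.ReflTransGen latinStep (ind f₁) (ind f₂) := rowPerm hf₁ (Equiv.swap 1 2)
    have hf₂ : Latinf f₂ := ⟨fun i => hf₁.1 _, fun j => (hf₁.2 j).comp (Equiv.swap 1 2).injective⟩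
    have h0' : ∀ j, f₂ 0 j = j := by
      intro j
      show f₁ (Equiv.swap 1 2 0) j = j
      rw [Equiv.swap_apply_of_ne_of_ne (by decide) (by decide)]
      exact h0 j
    have h10' : f₂ 1 0 = 2 := by
      show f₁ (Equiv.swap 1 2 1) 0 = 2
      rw [Equiv.swap_apply_left]
      have a : f₁ 2 0 ≠ 0 := fun e : f₁ 2 0 = 0 =>
        (show (2:Fin 3) ≠ 0 by decide) (hf₁.2 0 (e.trans (h0 0).symm))
      have b : f₁ 2 0 ≠ 1 := fun e : f₁ 2 0 = 1 =>
        (show (2:Fin 3) ≠ 1 by decide) (hf₁.2 0 (e.trans h1'.symm))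
      rcases tri (f₁ 2 0) with e | e | e <;> simp_all
    rw [uniq hf₂ h0' h10'] at p2
    exact p1.trans p2

-- latinT forward: latinT x → ∃ f, Latinf f ∧ x = ind f
lemma latinT_exists {x : Fin 3 → Fin 3 → Fin 3 → ℤ} (hx : latinT x) :
    ∃ f, Latinf f ∧ x = ind f := by
  obtain ⟨h01, hk, hj, hi⟩ := hx
  have key : ∀ i j, ∃ k, x i j k = 1 ∧ ∀ k', k' ≠ k → x i j k' = 0 := by
    intro i j
    have h := hk i j
    rw [Fin.sum_univ_three] at h
    rcases h01 i j 0 with h0 | h0 <;> rcases h01 i j 1 with h1 | h1 <;>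
      rcases h01 i j 2 with h2 | h2 <;>
      [skip; exact ⟨2, h2, by intro k' hk'; fin_cases k' <;> simp_all⟩;
       exact ⟨1, h1, by intro k' hk'; fin_cases k' <;> simp_all⟩; skip;
       exact ⟨0, h0, by intro k' hk'; fin_cases k' <;> simp_all⟩; skip; skip; skip] <;>
      omega
  choose f hf1 hf2 using key
  have hxf : x = ind f := by
    funext i j k
    unfold ind
    by_cases h : f i j = k
    · subst h; simp [hf1]
    · simp [h, hf2 i j k (fun e => h e.symm)]
  subst hxf
  refine ⟨f, ⟨fun i a b hab => ?_, fun j a b hab => ?_⟩, rfl⟩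
  · by_contra hne
    have h := hj i (f i a)
    rw [Fin.sum_univ_three] at h
    have e1 : ind f i a (f i a) = 1 := by simp [ind]
    have e2 : ind f i b (f i a) = 1 := by simp [ind, hab]
    have z0 := h01 i 0 (f i a); have z1 := h01 i 1 (f i a); have z2 := h01 i 2 (f i a)
    fin_cases a <;> fin_cases b <;> simp_all <;> omega
  · by_contra hne
    simp only at hab
    have h := hi j (f a j)
    rw [Fin.sum_univ_three] at h
    have e1 : ind f a j (f a j) = 1 := by simp [ind]
    have e2 : ind f b j (f a j) = 1 := by simp [ind, hab]
    have z0 := h01 0 j (f a j); have z1 := h01 1 j (f a j); have z2 := h01 2 j (f a j)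
    fin_cases a <;> fin_cases b <;> simp_all <;> omega


theorem stmt14 (x y : Fin 3 → Fin 3 → Fin 3 → ℤ)
    (hx : latinT x) (hy : latinT y) :
    Relation.ReflTransGen latinStep x y := by
  obtain ⟨f, hf, rfl⟩ := latinT_exists hx
  obtain ⟨g, hg, rfl⟩ := latinT_exists hy
  exact (reach_c hf).trans (rtg_aux (reach_c hg) (latinT_ind hg)).2
end

section
/- A loop z_r(i_{[r]}; j_{[r]}) on S of degree r is df 1 (i.e., the rectangular index set I(i_{[r]}; j_{[r]}) contains no support of a loop on S of degree 2,…,r−1) if and only if I(i_{[r]}; j_{[r]}) contains exactly two elements of S in every one of its rows and columns. -/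
/-!
Every row of the rectangle already holds the two cells `(i k, j k)` and `(i k, j (k + 1))` of
the loop, and every column `l` the cells `(i l, j l)` and `(i (l - 1), j l)`. Any further cell
`(i k, j l)` of `S` is a chord: following the loop from row `l` to row `k` and returning through
the chord gives a loop of smaller degree.

Conversely, if the rectangle meets `S` only in the support of the loop, let `A` and `B` be the
row and column index sets of a loop inside the rectangle. Row `a` of the rectangle has its cells
of `S` in columns `a` and `a + 1`, and the loop uses two distinct columns in each of its rows, so
both `a` and `a + 1` lie in `B`. Since `#A = #B`, this gives `A = B` and `A + 1 ⊆ A`, which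
forces `A` to be all of `Fin r`; so the loop has degree `r`.
-/

open scoped Fin.NatCast Fin.CommRing

theorem Fin.self_ne_add_one {r : ℕ} [NeZero r] (hr : 2 ≤ r) (k : Fin r) : k ≠ k + 1 := by
  intro h
  have := congrArg Fin.val (add_eq_left.mp h.symm)
  simp [Nat.mod_eq_of_lt hr] at this

theorem Fin.eq_univ_of_forall_add_one_mem {r : ℕ} [NeZero r] {A : Finset (Fin r)}
    (hA : A.Nonempty) (h : ∀ x ∈ A, x + 1 ∈ A) : A = Finset.univ := by
  obtain ⟨x, hx⟩ := hA
  have hxn : ∀ n : ℕ, x + n ∈ A := by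
    intro n
    induction n with
    | zero => simpa using hx
    | succ n ih => simpa [add_assoc] using h _ ih
  refine Finset.eq_univ_of_forall fun y => ?_
  simpa using hxn (y - x).val

theorem Finset.card_filter_eq_two_iff {α : Type*} [Fintype α] [DecidableEq α] {p : α → Prop}
    [DecidablePred p] {x y : α} (hxy : x ≠ y) (hx : p x) (hy : p y) :
    (univ.filter p).card = 2 ↔ ∀ z, p z → z = x ∨ z = y := by
  have hsub : ({x, y} : Finset α) ⊆ univ.filter p := by
    simp [insert_subset_iff, hx, hy]
  constructor
  · intro hcard z hz
    have heq := eq_of_subset_of_card_le hsub (by rw [hcard, card_pair hxy])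
    have hmem : z ∈ ({x, y} : Finset α) := by rw [heq]; simpa using hz
    simpa using hmem
  · intro h
    rw [← card_pair hxy]
    congr 1
    ext z
    simp only [mem_filter, mem_univ, true_and, mem_insert, mem_singleton]
    exact ⟨h z, by rintro (rfl | rfl) <;> assumption⟩

section Loops

variable {I J r : ℕ} [NeZero r] {S : Finset (Fin I × Fin J)} {i : Fin r → Fin I}
  {j : Fin r → Fin J}

variable (S i j) in
/-- A loop on `S` of degree `s + 2` whose support lies in the rectangle `I(i; j)`. -/
def HasLoopInRectangle (s : ℕ) : Prop :=
  ∃ (i' : Fin (s + 2) → Fin I) (j' : Fin (s + 2) → Fin J),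
    Function.Injective i' ∧ Function.Injective j' ∧
    ∀ l : Fin (s + 2),
      (i' l, j' l) ∈ S ∧ (i' l, j' (l + 1)) ∈ S ∧ (∃ k, i' l = i k) ∧ (∃ k, j' l = j k)

/-- The loop through rows `l, l + 1, …, l + s + 1`, closed by the chord. -/
theorem hasLoopInRectangle_of_chord (hi : Function.Injective i) (hj : Function.Injective j)
    (honS : ∀ k : Fin r, (i k, j k) ∈ S ∧ (i k, j (k + 1)) ∈ S)
    {s : ℕ} (hs : s + 2 < r) (l : Fin r) (hchord : (i (l + (s + 1 : ℕ)), j l) ∈ S) :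
    HasLoopInRectangle S i j s := by
  have hshift : Function.Injective fun t : Fin (s + 2) => l + (t.val : Fin r) := by
    intro t₁ t₂ h
    have h' := congrArg Fin.val (add_left_cancel h)
    rwa [Fin.val_cast_of_lt (by omega), Fin.val_cast_of_lt (by omega), Fin.val_inj] at h'
  refine ⟨fun t => i (l + t.val), fun t => j (l + t.val), hi.comp hshift, hj.comp hshift,
    fun t => ⟨(honS _).1, ?_, ⟨_, rfl⟩, ⟨_, rfl⟩⟩⟩
  obtain ht | ht := Nat.lt_or_ge (t.val + 1) (s + 2)
  · simpa [Fin.val_add_one_of_lt' ht, add_assoc] using (honS (l + t.val)).2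
  · have hlast : t = Fin.last (s + 1) := Fin.ext (by simp; omega)
    simpa [hlast] using hchord

theorem eq_or_eq_add_one_of_mem_of_not_hasLoopInRectangle (hi : Function.Injective i)
    (hj : Function.Injective j) (honS : ∀ k : Fin r, (i k, j k) ∈ S ∧ (i k, j (k + 1)) ∈ S)
    (hdf : ¬ ∃ s, s + 2 < r ∧ HasLoopInRectangle S i j s) {k l : Fin r}
    (hkl : (i k, j l) ∈ S) : l = k ∨ l = k + 1 := by
  by_contra! hne
  set d := (k - l).val with hd
  have hd_pos : d ≠ 0 := fun h => hne.1 (sub_eq_zero.mp (Fin.ext h)).symm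
  have hd_lt : d + 1 < r := by
    by_contra! hge
    have : (k - l) + 1 = 0 := by
      rw [← Fin.cast_val_eq_self (k - l), ← hd, ← Nat.cast_add_one,
        show d + 1 = r by have := (k - l).isLt; omega, Fin.natCast_self]
    exact hne.2 (by linear_combination -this)
  refine hdf ⟨d - 1, by omega, hasLoopInRectangle_of_chord hi hj honS (by omega) l ?_⟩
  rwa [Nat.sub_add_cancel (Nat.one_le_iff_ne_zero.mpr hd_pos), hd, Fin.cast_val_eq_self,
    add_sub_cancel]

theorem le_of_hasLoopInRectangle (hS : ∀ k l : Fin r, (i k, j l) ∈ S → l = k ∨ l = k + 1)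
    {s : ℕ} (hloop : HasLoopInRectangle S i j s) : r ≤ s + 2 := by
  obtain ⟨i', j', hi', hj', hcells⟩ := hloop
  choose a ha using fun t => (hcells t).2.2.1
  choose b hb using fun t => (hcells t).2.2.2
  have ha_inj : Function.Injective a := fun t₁ t₂ h => hi' (by rw [ha, ha, h])
  have hb_inj : Function.Injective b := fun t₁ t₂ h => hj' (by rw [hb, hb, h])
  have hrows : ∀ t, a t ∈ Set.range b ∧ a t + 1 ∈ Set.range b := by
    intro t
    have h₀ := hS (a t) (b t) (by rw [← ha, ← hb]; exact (hcells t).1)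
    have h₁ := hS (a t) (b (t + 1)) (by rw [← ha, ← hb]; exact (hcells t).2.1)
    have hne : b t ≠ b (t + 1) := hb_inj.ne (by simp)
    grind
  set A := Finset.univ.image a
  have hAB : A = Finset.univ.image b := by
    refine Finset.eq_of_subset_of_card_le ?_ ?_
    · grind
    · rw [Finset.card_image_of_injective _ ha_inj, Finset.card_image_of_injective _ hb_inj]
  have hA : A = Finset.univ := by
    refine Fin.eq_univ_of_forall_add_one_mem (Finset.univ_nonempty.image a) ?_
    intro x hx
    obtain ⟨t, -, rfl⟩ := Finset.mem_image.mp hx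
    obtain ⟨t', ht'⟩ := (hrows t).2
    rw [hAB, ← ht']
    exact Finset.mem_image_of_mem b (Finset.mem_univ t')
  have hcard := Finset.card_image_of_injective Finset.univ ha_inj
  rw [← Finset.card_fin r, ← Finset.card_fin (s + 2), ← hcard, ← hA]

end Loops

theorem stmt16 {I J r : ℕ} [NeZero r] (hr : 2 ≤ r)
    (S : Finset (Fin I × Fin J))
    (i : Fin r → Fin I) (j : Fin r → Fin J)
    (hi : Function.Injective i) (hj : Function.Injective j)
    -- the loop z_r(i_{[r]}; j_{[r]}) is a loop on S
    (honS : ∀ k : Fin r, (i k, j k) ∈ S ∧ (i k, j (k + 1)) ∈ S) :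
    -- df 1: the rectangle I(i_{[r]}; j_{[r]}) contains no support of a loop on S
    -- of degree 2,…,r−1
    (¬ ∃ (s : ℕ), s + 2 < r ∧
        ∃ (i' : Fin (s + 2) → Fin I) (j' : Fin (s + 2) → Fin J),
          Function.Injective i' ∧ Function.Injective j' ∧
          ∀ l : Fin (s + 2),
            (i' l, j' l) ∈ S ∧ (i' l, j' (l + 1)) ∈ S ∧
            (∃ k, i' l = i k) ∧ (∃ k, j' l = j k))
    ↔
    ((∀ k : Fin r, (Finset.univ.filter (fun l : Fin r => (i k, j l) ∈ S)).card = 2) ∧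
     (∀ l : Fin r, (Finset.univ.filter (fun k : Fin r => (i k, j l) ∈ S)).card = 2)) := by
  constructor
  · intro hdf
    have hS : ∀ k l, (i k, j l) ∈ S → l = k ∨ l = k + 1 := fun _ _ =>
      eq_or_eq_add_one_of_mem_of_not_hasLoopInRectangle hi hj honS hdf
    refine ⟨fun k => ?_, fun l => ?_⟩
    · rw [Finset.card_filter_eq_two_iff (Fin.self_ne_add_one hr k) (honS k).1 (honS k).2]
      exact hS k
    · have hcol : (i (l - 1), j l) ∈ S := by simpa using (honS (l - 1)).2
      have hne : l ≠ l - 1 := by simpa using (Fin.self_ne_add_one hr (l - 1)).symm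
      rw [Finset.card_filter_eq_two_iff hne (honS l).1 hcol]
      intro k hk
      rcases hS k l hk with rfl | rfl
      exacts [Or.inl rfl, Or.inr (add_sub_cancel_right k 1).symm]
  · rintro ⟨hrow, -⟩ ⟨s, hs, hloop⟩
    have hS k l : (i k, j l) ∈ S → l = k ∨ l = k + 1 :=
      (Finset.card_filter_eq_two_iff (Fin.self_ne_add_one hr k) (honS k).1 (honS k).2).mp
        (hrow k) l
    exact absurd (le_of_hasLoopInRectangle hS hloop) (by omega)
end
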